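/- arXiv:2112.15030 — 4 statements merged into one kernel-verified Lean document; each statement's English description precedes it below -/
import Mathlib

section
/- Let A and B be real p × n matrices, and let F^{S_A} and F^{S_B} denote the cumulative distribution functions of the empirical spectral distributions of AAᵀ and BBᵀ respectively. Then the Lévy distance L between them satisfies L(F^{S_A}, F^{S_B})⁴ ≤ (2/p²) · Tr(AAᵀ + BBᵀ) · Tr((A − B)(A − B)ᵀ). -/
open MeasureTheory ProbabilityTheory Filter Topology Matrix
open scoped ENNReal NNReal BigOperators Classical

noncomputable section

/-- The empirical spectral distribution of a Hermitian (real symmetric) matrix. -/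
def esd {m : ℕ} (A : Matrix (Fin m) (Fin m) ℝ) (hA : A.IsHermitian) : Measure ℝ :=
  ((m : ℝ≥0∞))⁻¹ • ∑ i : Fin m, Measure.dirac (hA.eigenvalues i)

lemma gram_isHermitian {p n : ℕ} (Z : Matrix (Fin p) (Fin n) ℝ) : (Z * Zᵀ).IsHermitian := by
  have h := Matrix.isHermitian_mul_conjTranspose_self Z
  rwa [Matrix.conjTranspose_eq_transpose_of_trivial] at h

/-- ESD of the Gram matrix `Z Zᵀ`. -/
def esdGram {p n : ℕ} (Z : Matrix (Fin p) (Fin n) ℝ) : Measure ℝ :=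
  esd (Z * Zᵀ) (gram_isHermitian Z)

/-- Weak convergence of a sequence of measures on ℝ. -/
def WeakLim (μs : ℕ → Measure ℝ) (μ : Measure ℝ) : Prop :=
  ∀ f : BoundedContinuousFunction ℝ ℝ,
    Tendsto (fun n => ∫ v, f v ∂(μs n)) atTop (𝓝 (∫ v, f v ∂μ))

/-- Truncation `x 1{|x| ≤ t}` at a (possibly infinite) level `t`. -/
def trunc (t : ℝ≥0∞) (v : ℝ) : ℝ := if ENNReal.ofReal |v| ≤ t then v else 0

/-- `P` is a partition of `{1, …, m}`. -/
def IsPart (m : ℕ) (P : Finset (Finset ℕ)) : Prop :=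
  (∀ B ∈ P, B.Nonempty) ∧ (∀ B ∈ P, B ⊆ Finset.Icc 1 m) ∧
    (∀ B ∈ P, ∀ C ∈ P, B ≠ C → Disjoint B C) ∧
    (∀ x ∈ Finset.Icc 1 m, ∃ B ∈ P, x ∈ B)

/-- All partitions of `{1, …, m}`. -/
def partitionsOf (m : ℕ) : Finset (Finset (Finset ℕ)) :=
  ((Finset.Icc 1 m).powerset.powerset).filter (IsPart m)

/-- Least element of a finite set of naturals (`0` for the empty set). -/
def minOf (B : Finset ℕ) : ℕ := WithTop.untopD 0 B.min

/-- Every maximal run of consecutive integers in `B` has even length,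
i.e. `B` is a union of sets of even sizes of consecutive integers. -/
def EvenRuns (B : Finset ℕ) : Prop :=
  ∀ a b : ℕ, a ≤ b → (∀ x, a ≤ x → x ≤ b → x ∈ B) → (a - 1) ∉ B → (b + 1) ∉ B →
    Even (b + 1 - a)

/-- A special symmetric partition of `{1, …, 2k}`. -/
def SpecialSymmetric (k : ℕ) (P : Finset (Finset ℕ)) : Prop :=
  IsPart (2 * k) P ∧
  (∀ B ∈ P, (∀ C ∈ P, C.min ≤ B.min) → EvenRuns B) ∧
  (∀ V ∈ P, ∀ W ∈ P, V ≠ W → ∀ u ∈ V, ∀ v ∈ V, u < v → (∀ x ∈ V, ¬(u < x ∧ x < v)) →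
    (W.filter (fun w => u < w ∧ w < v ∧ Odd w)).card
      = (W.filter (fun w => u < w ∧ w < v ∧ Even w)).card)

/-- The special symmetric partitions of `{1,…,2k}` (as a finite set). -/
def SSpart (k : ℕ) : Finset (Finset (Finset ℕ)) :=
  (partitionsOf (2 * k)).filter (SpecialSymmetric k)

/-- The special symmetric partitions of `{1,…,2k}` with exactly `b` blocks. -/
def SSb (k b : ℕ) : Finset (Finset (Finset ℕ)) :=
  (SSpart k).filter (fun P => P.card = b)

/-- Number `r` of blocks with even least element ("`r+1` even generating vertices"). -/
def evenGenCount (P : Finset (Finset ℕ)) : ℕ :=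
  (P.filter (fun B => Even (minOf B))).card

/-- Extend a map on `{0,…,2k}` (coded as `Fin (2k+1)`) to all of ℕ. -/
def ext' {m : ℕ} (π : Fin (m + 1) → ℕ) (i : ℕ) : ℕ :=
  if h : i < m + 1 then π ⟨i, h⟩ else 0

/-- The set of S-circuits of length `2k` matching a partition `σ` of `{1,…,2k}`. -/
def PiS (p n k : ℕ) (σ : Finset (Finset ℕ)) : Set (Fin (2 * k + 1) → ℕ) :=
  { π | ext' π 0 = ext' π (2 * k) ∧
      (∀ i : ℕ, i ≤ 2 * k →
        (Even i → 1 ≤ ext' π i ∧ ext' π i ≤ p) ∧ (Odd i → 1 ≤ ext' π i ∧ ext' π i ≤ n)) ∧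
      (∀ i ∈ Finset.Icc 1 (2 * k), ∀ j ∈ Finset.Icc 1 (2 * k),
        ((∃ B ∈ σ, i ∈ B ∧ j ∈ B) ↔
          ((ext' π (i - 1), ext' π i) = (ext' π (j - 1), ext' π j) ∨
            (ext' π (i - 1), ext' π i) = (ext' π j, ext' π (j - 1))))) }

/-- The set of W-circuits of length `2k` (Wigner link function) matching `σ`. -/
def PiW (n k : ℕ) (σ : Finset (Finset ℕ)) : Set (Fin (2 * k + 1) → ℕ) :=
  { π | ext' π 0 = ext' π (2 * k) ∧
      (∀ i : ℕ, i ≤ 2 * k → 1 ≤ ext' π i ∧ ext' π i ≤ n) ∧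
      (∀ i ∈ Finset.Icc 1 (2 * k), ∀ j ∈ Finset.Icc 1 (2 * k),
        ((∃ B ∈ σ, i ∈ B ∧ j ∈ B) ↔
          Sym2.mk (ext' π (i - 1), ext' π i) = Sym2.mk (ext' π (j - 1), ext' π j))) }

/-- Positions `i, j ∈ {0,…,2k}` carry the same value in every circuit of `Π_S(σ)`. -/
def SameVal (k : ℕ) (σ : Finset (Finset ℕ)) (i j : ℕ) : Prop :=
  ∀ p n : ℕ, ∀ π ∈ PiS p n k σ, ext' π i = ext' π j

/-- Canonical representative (least equivalent position) of position `i`. -/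
def rep (k : ℕ) (σ : Finset (Finset ℕ)) (i : ℕ) : Fin (2 * k + 1) :=
  ⟨min (sInf {j | SameVal k σ i j}) (2 * k), by omega⟩

/-- The quantity `I_y(σ)`: `y^r` times the integral over `[0,1]^{b+1}` of the product over
the blocks of `σ` of `g_{|B|}` evaluated at the variables of the generating vertices
corresponding to the first appearance of each block.  (Assigning one variable to each
position and identifying forced-equal positions gives the same value as integrating over
one variable per generating vertex.) -/
def Iy (k : ℕ) (y : ℝ) (g : ℕ → ℝ → ℝ → ℝ) (σ : Finset (Finset ℕ)) : ℝ :=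
  y ^ evenGenCount σ *
    ∫ x : Fin (2 * k + 1) → ℝ,
      (∏ B ∈ σ, g B.card (x (rep k σ (minOf B - 1))) (x (rep k σ (minOf B))))
      ∂(Measure.pi fun _ => volume.restrict (Set.Icc (0 : ℝ) 1))

/-- sup of `|g|` over `[0,1]²`. -/
def Msup (g : ℝ → ℝ → ℝ) : ℝ :=
  sSup ((fun z : ℝ × ℝ => |g z.1 z.2|) '' (Set.Icc (0 : ℝ) 1 ×ˢ Set.Icc (0 : ℝ) 1))

/-- `M_m`: sup norm of `g_{m}` for even `m` (here `g k` codes `g_{2k}`), `0` for odd `m`. -/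
def Mval (g : ℕ → ℝ → ℝ → ℝ) (m : ℕ) : ℝ :=
  if Even m then Msup (g (m / 2)) else 0

/-- `α_{2k} = Σ_{σ ∈ P(2k)} M_σ`. -/
def alphaCarleman (g : ℕ → ℝ → ℝ → ℝ) (m : ℕ) : ℝ :=
  ∑ P ∈ partitionsOf m, ∏ B ∈ P, Mval g B.card

/-- Assumption A for the triangular array `x`, truncation levels `t`,
pre-limit functions `gn` (where `gn k n` codes `g_{2k,n}`) and limit functions
`g` (where `g k` codes `g_{2k}`), with aspect ratio `y`. -/
structure AssumpA {Ω : Type*} [MeasurableSpace Ω] (Pr : Measure Ω) (y : ℝ) (p : ℕ → ℕ)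
    (x : (n : ℕ) → Fin (p n) → Fin n → Ω → ℝ) (t : ℕ → ℝ≥0∞)
    (gn : ℕ → ℕ → ℝ → ℝ → ℝ) (g : ℕ → ℝ → ℝ → ℝ) : Prop where
  prob : IsProbabilityMeasure Pr
  ypos : 0 < y
  ratio : Tendsto (fun n => (p n : ℝ) / n) atTop (𝓝 y)
  meas : ∀ n i j, Measurable (x n i j)
  indep : ∀ n, iIndepFun
    (fun ij : Fin (p n) × Fin n => x n ij.1 ij.2) Pr
  gn_bdd : ∀ k n, ∃ M : ℝ, ∀ a ∈ Set.Icc (0 : ℝ) 1, ∀ b ∈ Set.Icc (0 : ℝ) 1,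
    |gn k n a b| ≤ M
  gn_riemann : ∀ k n,
    volume {z : ℝ × ℝ | z ∈ Set.Icc (0 : ℝ) 1 ×ˢ Set.Icc (0 : ℝ) 1 ∧
      ¬ ContinuousWithinAt (fun w : ℝ × ℝ => gn k n w.1 w.2)
          (Set.Icc (0 : ℝ) 1 ×ˢ Set.Icc (0 : ℝ) 1) z} = 0
  moment_even : ∀ k : ℕ, 1 ≤ k → ∀ n : ℕ, 1 ≤ n → ∀ i j,
    (n : ℝ) * ∫ ω, (trunc (t n) (x n i j ω)) ^ (2 * k) ∂Pr
      = gn k n (((i : ℕ) + 1) / (p n)) (((j : ℕ) + 1) / n)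
  moment_odd : ∀ k : ℕ, 1 ≤ k → ∀ α : ℝ, α < 1 →
    Tendsto (fun n : ℕ => (n : ℝ) ^ α *
      ⨆ i : Fin (p n), ⨆ j : Fin n,
        |∫ ω, (trunc (t n) (x n i j ω)) ^ (2 * k - 1) ∂Pr|) atTop (𝓝 0)
  g_unif : ∀ k, TendstoUniformlyOn (fun n (z : ℝ × ℝ) => gn k n z.1 z.2)
    (fun z : ℝ × ℝ => g k z.1 z.2) atTop (Set.Icc (0 : ℝ) 1 ×ˢ Set.Icc (0 : ℝ) 1)
  carleman : ¬ Summable (fun k : ℕ =>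
    (alphaCarleman g (2 * (k + 1))) ^ (-(1 / (2 * ((k : ℝ) + 1)))))

/-- The truncated matrix `Z_p` as a random matrix. -/
def Zmat {Ω : Type*} (p : ℕ → ℕ) (x : (n : ℕ) → Fin (p n) → Fin n → Ω → ℝ)
    (t : ℕ → ℝ≥0∞) (n : ℕ) (ω : Ω) : Matrix (Fin (p n)) (Fin n) ℝ :=
  Matrix.of fun i j => trunc (t n) (x n i j ω)

end
noncomputable section

lemma isHermitian_of_transpose_eq {m : ℕ} {A : Matrix (Fin m) (Fin m) ℝ}
    (h : Aᵀ = A) : A.IsHermitian := by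
  show Aᴴ = A
  rw [Matrix.conjTranspose_eq_transpose_of_trivial]
  exact h

lemma smulGram_isHermitian {p n : ℕ} (c : ℝ) (Z : Matrix (Fin p) (Fin n) ℝ) :
    (c • (Z * Zᵀ)).IsHermitian := by
  show _ᴴ = _
  rw [Matrix.conjTranspose_eq_transpose_of_trivial, Matrix.transpose_smul,
    Matrix.transpose_mul, Matrix.transpose_transpose]

/-- Symmetrization: the symmetric matrix whose `(i,j)` entry, for `i ≤ j`, is `f i j`. -/
def symMat (n : ℕ) (f : Fin n → Fin n → ℝ) : Matrix (Fin n) (Fin n) ℝ :=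
  Matrix.of fun i j => if (i : ℕ) ≤ (j : ℕ) then f i j else f j i

lemma symMat_isHermitian (n : ℕ) (f : Fin n → Fin n → ℝ) : (symMat n f).IsHermitian := by
  apply isHermitian_of_transpose_eq
  ext i j
  simp only [Matrix.transpose_apply, symMat, Matrix.of_apply]
  by_cases h1 : (j : ℕ) ≤ (i : ℕ) <;> by_cases h2 : (i : ℕ) ≤ (j : ℕ) <;>
    simp only [h1, h2, if_true, if_false]
  · have : i = j := Fin.ext (le_antisymm h2 h1)
    subst this; rfl
  · omega

/-- A partition (as a finite set of blocks) is non-crossing. -/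
def NonCrossing (P : Finset (Finset ℕ)) : Prop :=
  ¬ ∃ a b c d : ℕ, a < b ∧ b < c ∧ c < d ∧
    ∃ B ∈ P, ∃ C ∈ P, B ≠ C ∧ a ∈ B ∧ c ∈ B ∧ b ∈ C ∧ d ∈ C

/-- `α_{m} = Σ_{σ ∈ E(m)} C_σ`, the multiplicative extension of `C` summed over
partitions with all blocks of even size. -/
def alphaE (C : ℕ → ℝ) (m : ℕ) : ℝ :=
  ∑ P ∈ (partitionsOf m).filter (fun P => ∀ B ∈ P, Even B.card), ∏ B ∈ P, C B.card

/-- `v² 1{|v| > t}`. -/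
def tailSq (t : ℝ≥0∞) (v : ℝ) : ℝ := if ENNReal.ofReal |v| ≤ t then 0 else v ^ 2

/-- The (untruncated) random matrix with entries `x n i j`. -/
def Xmat {Ω : Type*} (p : ℕ → ℕ) (x : (n : ℕ) → Fin (p n) → Fin n → Ω → ℝ)
    (n : ℕ) (ω : Ω) : Matrix (Fin (p n)) (Fin n) ℝ :=
  Matrix.of fun i j => x n i j ω

end
noncomputable section
/-- Cumulative distribution function of a measure on ℝ. -/
def cdfOf (μ : Measure ℝ) (v : ℝ) : ℝ := (μ (Set.Iic v)).toReal

/-- The Lévy distance between two (distribution) functions. -/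
def levyDist (F G : ℝ → ℝ) : ℝ :=
  sInf {ε : ℝ | 0 < ε ∧ ∀ v : ℝ, F (v - ε) - ε ≤ G v ∧ G v ≤ F (v + ε) + ε}
end

/-! Put `X = AAᵀ - BBᵀ`. Since `2X = (A - B)(A + B)ᵀ + (A + B)(A - B)ᵀ`, the eigenvalue of `X` at
a unit eigenvector `u` is `⟪(A - B)ᵀu, (A + B)ᵀu⟫`, so Cauchy–Schwarz over all eigenvectors and
coordinates gives `(∑ |λᵢ(X)|)² ≤ tr((A - B)(A - B)ᵀ) tr((A + B)(A + B)ᵀ)`, and the parallelogram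
law bounds this by `2 tr(AAᵀ + BBᵀ) tr((A - B)(A - B)ᵀ)`.

The eigenvectors of `AAᵀ` with eigenvalue `≤ v - ε` and those of `BBᵀ` with eigenvalue `> v` span
subspaces meeting in dimension `d ≥ #{λ(AAᵀ) ≤ v - ε} - #{λ(BBᵀ) ≤ v}`, on which the quadratic
form of `BBᵀ - AAᵀ` is at least `ε` on unit vectors. Summing it over an orthonormal basis of the
intersection and applying Bessel's inequality to the eigenbasis of `BBᵀ - AAᵀ` gives
`ε d ≤ ∑ |λᵢ(X)|`. So the Lévy condition holds at every `ε` with `p ε² ≥ ∑ |λᵢ(X)|`, that is,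
`L² ≤ ∑ |λᵢ(X)| / p`. -/

open scoped InnerProductSpace RealInnerProductSpace

namespace OrthonormalBasis

section RCLike

variable {ι 𝕜 E : Type*} [Fintype ι] [RCLike 𝕜] [NormedAddCommGroup E] [InnerProductSpace 𝕜 E]
  (b : OrthonormalBasis ι 𝕜 E)

lemma finrank_span_image (T : Finset ι) :
    Module.finrank 𝕜 (Submodule.span 𝕜 (b '' T)) = T.card := by
  rw [Set.image_eq_range, finrank_span_eq_card]
  · simp
  · exact b.orthonormal.linearIndependent.comp (fun i : T ↦ i.val) Subtype.val_injective

open Finset in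
lemma card_le_finrank_inf_add_card [DecidableEq ι] (c : OrthonormalBasis ι 𝕜 E)
    (s t : Finset ι) :
    #s ≤ Module.finrank 𝕜 ↥(Submodule.span 𝕜 (b '' s) ⊓ Submodule.span 𝕜 (c '' ↑tᶜ)) + #t := by
  have := Module.Finite.of_basis b.toBasis
  have hsum := Submodule.finrank_sup_add_finrank_inf_eq
    (Submodule.span 𝕜 (b '' s)) (Submodule.span 𝕜 (c '' ↑tᶜ))
  have hsup := Submodule.finrank_le (Submodule.span 𝕜 (b '' s) ⊔ Submodule.span 𝕜 (c '' ↑tᶜ))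
  rw [b.finrank_span_image, c.finrank_span_image, card_compl] at hsum
  rw [Module.finrank_eq_card_basis b.toBasis] at hsup
  omega

lemma inner_eq_zero_of_mem_span {T : Finset ι} {x : E} (hx : x ∈ Submodule.span 𝕜 (b '' T))
    {i : ι} (hi : i ∉ T) : ⟪b i, x⟫_𝕜 = 0 := by
  have : Submodule.span 𝕜 (b '' T) ≤ LinearMap.ker (innerₛₗ 𝕜 (b i)) := by
    rw [Submodule.span_le]
    rintro _ ⟨j, hj, rfl⟩
    exact b.inner_eq_zero fun hij => hi (hij ▸ hj)
  exact this hx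

end RCLike

section Real

variable {ι E : Type*} [Fintype ι] [NormedAddCommGroup E] [InnerProductSpace ℝ E]
  (b : OrthonormalBasis ι ℝ E) {T : Finset ι} {x : E}

lemma sum_mul_inner_sq_of_mem_span (hx : x ∈ Submodule.span ℝ (b '' T)) (f : ι → ℝ) :
    ∑ i, f i * ⟪b i, x⟫ ^ 2 = ∑ i ∈ T, f i * ⟪b i, x⟫ ^ 2 := by
  refine (Finset.sum_subset (Finset.subset_univ T) fun i _ hi => ?_).symm
  rw [b.inner_eq_zero_of_mem_span hx hi]
  ring

lemma norm_sq_eq_sum_of_mem_span (hx : x ∈ Submodule.span ℝ (b '' T)) :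
    ‖x‖ ^ 2 = ∑ i ∈ T, ⟪b i, x⟫ ^ 2 := by
  rw [← b.sum_sq_inner_right]
  simpa using b.sum_mul_inner_sq_of_mem_span hx 1

end Real

lemma sum_sum_transpose_mulVec_sq {ι κ : Type*} [Fintype ι] [Fintype κ]
    (b : OrthonormalBasis ι ℝ (EuclideanSpace ℝ ι)) (M : Matrix ι κ ℝ) :
    ∑ i, ∑ k, (Mᵀ *ᵥ b i) k ^ 2 = trace (M * Mᵀ) := by
  have hcol : ∀ i k, (Mᵀ *ᵥ b i) k = ⟪b i, WithLp.toLp 2 fun l => M l k⟫ := by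
    simp [Matrix.mulVec, dotProduct, EuclideanSpace.inner_eq_star_dotProduct]
  rw [Finset.sum_comm]
  simp_rw [hcol, b.sum_sq_inner_right, EuclideanSpace.real_norm_sq_eq]
  simp [Matrix.trace, Matrix.mul_apply, sq, Finset.sum_comm (γ := κ)]

end OrthonormalBasis

namespace Matrix.IsHermitian

variable {ι : Type*} [Fintype ι] [DecidableEq ι] {S T : Matrix ι ι ℝ}

lemma toEuclideanLin_eigenvectorBasis (hS : S.IsHermitian) (i : ι) :
    toEuclideanLin S (hS.eigenvectorBasis i) = hS.eigenvalues i • hS.eigenvectorBasis i := by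
  ext1
  simp [toLpLin_apply, hS.mulVec_eigenvectorBasis]

lemma inner_toEuclideanLin_self (hS : S.IsHermitian) (x : EuclideanSpace ℝ ι) :
    ⟪x, toEuclideanLin S x⟫ = ∑ i, hS.eigenvalues i * ⟪hS.eigenvectorBasis i, x⟫ ^ 2 := by
  rw [← hS.eigenvectorBasis.sum_inner_mul_inner]
  refine Finset.sum_congr rfl fun i _ => ?_
  rw [← isSymmetric_toEuclideanLin_iff.mpr hS, toEuclideanLin_eigenvectorBasis, inner_smul_left,
    real_inner_comm x]
  simp only [conj_trivial]
  ring

section span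

variable (hS : S.IsHermitian) {s : Finset ι} {x : EuclideanSpace ℝ ι} {t : ℝ}

lemma inner_toEuclideanLin_self_le_of_mem_span
    (hx : x ∈ Submodule.span ℝ (hS.eigenvectorBasis '' s)) (hs : ∀ i ∈ s, hS.eigenvalues i ≤ t) :
    ⟪x, toEuclideanLin S x⟫ ≤ t * ‖x‖ ^ 2 := by
  rw [hS.inner_toEuclideanLin_self, hS.eigenvectorBasis.sum_mul_inner_sq_of_mem_span hx,
    hS.eigenvectorBasis.norm_sq_eq_sum_of_mem_span hx, Finset.mul_sum]
  exact Finset.sum_le_sum fun i hi => mul_le_mul_of_nonneg_right (hs i hi) (sq_nonneg _)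

lemma le_inner_toEuclideanLin_self_of_mem_span
    (hx : x ∈ Submodule.span ℝ (hS.eigenvectorBasis '' s)) (hs : ∀ i ∈ s, t ≤ hS.eigenvalues i) :
    t * ‖x‖ ^ 2 ≤ ⟪x, toEuclideanLin S x⟫ := by
  rw [hS.inner_toEuclideanLin_self, hS.eigenvectorBasis.sum_mul_inner_sq_of_mem_span hx,
    hS.eigenvectorBasis.norm_sq_eq_sum_of_mem_span hx, Finset.mul_sum]
  exact Finset.sum_le_sum fun i hi => mul_le_mul_of_nonneg_right (hs i hi) (sq_nonneg _)

end span

lemma sum_inner_toEuclideanLin_le_sum_abs_eigenvalues (hS : S.IsHermitian) {κ : Type*}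
    [Fintype κ] {g : κ → EuclideanSpace ℝ ι} (hg : Orthonormal ℝ g) :
    ∑ j, ⟪g j, toEuclideanLin S (g j)⟫ ≤ ∑ i, |hS.eigenvalues i| := by
  simp_rw [hS.inner_toEuclideanLin_self]
  rw [Finset.sum_comm]
  simp_rw [← Finset.mul_sum]
  refine Finset.sum_le_sum fun i _ => ?_
  have hbessel : ∑ j, ⟪hS.eigenvectorBasis i, g j⟫ ^ 2 ≤ 1 := by
    simpa [real_inner_comm] using hg.sum_inner_products_le (hS.eigenvectorBasis i) (s := .univ)
  calc hS.eigenvalues i * ∑ j, ⟪hS.eigenvectorBasis i, g j⟫ ^ 2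
      ≤ |hS.eigenvalues i| * ∑ j, ⟪hS.eigenvectorBasis i, g j⟫ ^ 2 :=
        mul_le_mul_of_nonneg_right (le_abs_self _) (by positivity)
    _ ≤ |hS.eigenvalues i| := mul_le_of_le_one_right (abs_nonneg _) hbessel

open Finset in
lemma mul_card_sub_card_le_sum_abs_eigenvalues (hS : S.IsHermitian) (hT : T.IsHermitian)
    {ε : ℝ} (hε : 0 ≤ ε) (v : ℝ) :
    ε * ((#{i | hS.eigenvalues i ≤ v - ε} : ℝ) - #{i | hT.eigenvalues i ≤ v}) ≤
      ∑ i, |(hT.sub hS).eigenvalues i| := by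
  set s : Finset ι := {i | hS.eigenvalues i ≤ v - ε}
  set t : Finset ι := {i | hT.eigenvalues i ≤ v}
  set W := Submodule.span ℝ (hS.eigenvectorBasis '' s) ⊓
    Submodule.span ℝ (hT.eigenvectorBasis '' ↑tᶜ)
  have hdim : (#s : ℝ) ≤ Module.finrank ℝ W + #t := mod_cast hS.eigenvectorBasis.card_le_finrank_inf_add_card hT.eigenvectorBasis s t
  obtain ⟨g, hg, hgW⟩ : ∃ g : Fin (Module.finrank ℝ W) → EuclideanSpace ℝ ι,
      Orthonormal ℝ g ∧ ∀ j, g j ∈ W :=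
    ⟨_, (stdOrthonormalBasis ℝ W).orthonormal.comp_linearIsometry W.subtypeₗᵢ,
      fun j => (stdOrthonormalBasis ℝ W j).2⟩
  have hgap : ∀ j, ε ≤ ⟪g j, toEuclideanLin (T - S) (g j)⟫ := by
    intro j
    have hS_le := hS.inner_toEuclideanLin_self_le_of_mem_span (Submodule.mem_inf.mp (hgW j)).1
      fun i hi => (mem_filter.mp hi).2
    have hT_ge := hT.le_inner_toEuclideanLin_self_of_mem_span (Submodule.mem_inf.mp (hgW j)).2
      fun i hi => (not_le.mp (by simpa [t] using hi)).le
    rw [hg.1 j] at hS_le hT_ge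
    rw [map_sub, LinearMap.sub_apply, inner_sub_right]
    linarith
  calc ε * ((#s : ℝ) - #t)
      ≤ ∑ _j : Fin (Module.finrank ℝ W), ε := by
        rw [sum_const, card_univ, Fintype.card_fin, nsmul_eq_mul, mul_comm]
        gcongr
        linarith
    _ ≤ ∑ j, ⟪g j, toEuclideanLin (T - S) (g j)⟫ := sum_le_sum fun j _ => hgap j
    _ ≤ ∑ i, |(hT.sub hS).eigenvalues i| :=
        (hT.sub hS).sum_inner_toEuclideanLin_le_sum_abs_eigenvalues hg

variable {κ : Type*} [Fintype κ]

lemma eigenvalues_eq_dotProduct_of_two_smul_eq {X : Matrix ι ι ℝ} (hX : X.IsHermitian)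
    {P Q : Matrix ι κ ℝ} (h : P * Qᵀ + Q * Pᵀ = (2 : ℝ) • X) (i : ι) :
    hX.eigenvalues i = (Pᵀ *ᵥ hX.eigenvectorBasis i) ⬝ᵥ (Qᵀ *ᵥ hX.eigenvectorBasis i) := by
  set u : ι → ℝ := ⇑(hX.eigenvectorBasis i)
  have hquad : ∀ M N : Matrix ι κ ℝ, u ⬝ᵥ (M * Nᵀ) *ᵥ u = (Mᵀ *ᵥ u) ⬝ᵥ (Nᵀ *ᵥ u) := by
    intro M N
    simp only [← mulVec_mulVec, dotProduct_mulVec, mulVec_transpose]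
  have h2 := congrArg (fun Y => u ⬝ᵥ Y *ᵥ u) h
  simp only [add_mulVec, dotProduct_add, hquad, smul_mulVec, dotProduct_smul, smul_eq_mul,
    dotProduct_comm (Qᵀ *ᵥ u)] at h2
  rw [hX.eigenvalues_eq, star_trivial, RCLike.re_to_real]
  linarith

lemma sq_sum_abs_eigenvalues_le_trace_mul_trace {X : Matrix ι ι ℝ} (hX : X.IsHermitian)
    {P Q : Matrix ι κ ℝ} (h : P * Qᵀ + Q * Pᵀ = (2 : ℝ) • X) :
    (∑ i, |hX.eigenvalues i|) ^ 2 ≤ trace (P * Pᵀ) * trace (Q * Qᵀ) := by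
  set u := hX.eigenvectorBasis
  have habs : ∀ i, |hX.eigenvalues i| ≤ ∑ k, |(Pᵀ *ᵥ u i) k| * |(Qᵀ *ᵥ u i) k| := fun i => by
    rw [hX.eigenvalues_eq_dotProduct_of_two_smul_eq h i, dotProduct]
    exact (Finset.abs_sum_le_sum_abs _ _).trans_eq (Finset.sum_congr rfl fun k _ => abs_mul _ _)
  calc (∑ i, |hX.eigenvalues i|) ^ 2
      ≤ (∑ ik : ι × κ, |(Pᵀ *ᵥ u ik.1) ik.2| * |(Qᵀ *ᵥ u ik.1) ik.2|) ^ 2 := by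
        rw [Fintype.sum_prod_type]
        gcongr with i
        exact habs i
    _ ≤ (∑ ik : ι × κ, |(Pᵀ *ᵥ u ik.1) ik.2| ^ 2) * ∑ ik : ι × κ, |(Qᵀ *ᵥ u ik.1) ik.2| ^ 2 :=
        Finset.sum_mul_sq_le_sq_mul_sq _ _ _
    _ = trace (P * Pᵀ) * trace (Q * Qᵀ) := by
        simp only [sq_abs, Fintype.sum_prod_type, u.sum_sum_transpose_mulVec_sq]

lemma sq_sum_abs_eigenvalues_gram_sub_gram_le {A B : Matrix ι κ ℝ}
    (hX : (A * Aᵀ - B * Bᵀ).IsHermitian) :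
    (∑ i, |hX.eigenvalues i|) ^ 2 ≤ 2 * trace (A * Aᵀ + B * Bᵀ) * trace ((A - B) * (A - B)ᵀ) := by
  have hpolar : (A - B) * (A + B)ᵀ + (A + B) * (A - B)ᵀ = (2 : ℝ) • (A * Aᵀ - B * Bᵀ) := by
    simp only [transpose_add, transpose_sub, Matrix.mul_add, Matrix.mul_sub, Matrix.add_mul,
      Matrix.sub_mul, two_smul]
    abel
  have hparallelogram :
      trace ((A + B) * (A + B)ᵀ) = 2 * trace (A * Aᵀ + B * Bᵀ) - trace ((A - B) * (A - B)ᵀ) := by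
    simp only [transpose_add, transpose_sub, Matrix.mul_add, Matrix.mul_sub, Matrix.add_mul,
      Matrix.sub_mul, trace_add, trace_sub]
    ring
  have h := hX.sq_sum_abs_eigenvalues_le_trace_mul_trace hpolar
  rw [hparallelogram] at h
  nlinarith [sq_nonneg (trace ((A - B) * (A - B)ᵀ))]

end Matrix.IsHermitian

open Finset in
lemma cdfOf_esd {m : ℕ} {S : Matrix (Fin m) (Fin m) ℝ} (hS : S.IsHermitian) (v : ℝ) :
    cdfOf (esd S hS) v = #{i | hS.eigenvalues i ≤ v} / m := by
  simp [cdfOf, esd, Measure.dirac_apply' _ measurableSet_Iic, Set.indicator_apply,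
    ENNReal.toReal_mul, div_eq_inv_mul]

open Finset in
lemma cdfOf_esd_sub_sub_le {m : ℕ} {S T : Matrix (Fin m) (Fin m) ℝ} (hS : S.IsHermitian)
    (hT : T.IsHermitian) {ε : ℝ} (hε : 0 < ε)
    (h : (∑ i, |(hT.sub hS).eigenvalues i|) / m ≤ ε ^ 2) (v : ℝ) :
    cdfOf (esd S hS) (v - ε) - ε ≤ cdfOf (esd T hT) v := by
  have hcount := hS.mul_card_sub_card_le_sum_abs_eigenvalues hT hε.le v
  rw [cdfOf_esd, cdfOf_esd, sub_le_iff_le_add', ← sub_le_iff_le_add, ← sub_div]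
  calc ((#{i | hS.eigenvalues i ≤ v - ε} : ℝ) - #{i | hT.eigenvalues i ≤ v}) / m
      ≤ (∑ i, |(hT.sub hS).eigenvalues i|) / ε / m := by
        gcongr
        rwa [le_div_iff₀ hε, mul_comm]
    _ ≤ ε := by
        rw [div_right_comm, div_le_iff₀ hε]
        linarith

lemma levyDist_nonneg (F G : ℝ → ℝ) : 0 ≤ levyDist F G :=
  Real.sInf_nonneg fun _ hε => hε.1.le

lemma levyDist_le {F G : ℝ → ℝ} {δ : ℝ} (hδ : 0 ≤ δ)
    (h : ∀ ε, δ < ε → ∀ v, F (v - ε) - ε ≤ G v ∧ G (v - ε) - ε ≤ F v) :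
    levyDist F G ≤ δ := by
  refine le_of_forall_gt_imp_ge_of_dense fun ε hε => csInf_le ⟨0, fun _ hε => hε.1.le⟩ ?_
  refine ⟨hδ.trans_lt hε, fun v => ⟨(h ε hε v).1, ?_⟩⟩
  simpa using (h ε hε (v + ε)).2

lemma levyDist_cdfOf_esd_sq_le {m : ℕ} {S T : Matrix (Fin m) (Fin m) ℝ} (hS : S.IsHermitian)
    (hT : T.IsHermitian) {c : ℝ} (hTS : ∑ i, |(hT.sub hS).eigenvalues i| ≤ c)
    (hST : ∑ i, |(hS.sub hT).eigenvalues i| ≤ c) :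
    levyDist (cdfOf (esd S hS)) (cdfOf (esd T hT)) ^ 2 ≤ c / m := by
  have hc : 0 ≤ c / m :=
    div_nonneg ((Finset.sum_nonneg fun i _ => abs_nonneg _).trans hTS) m.cast_nonneg
  have hL : levyDist (cdfOf (esd S hS)) (cdfOf (esd T hT)) ≤ √(c / m) := by
    refine levyDist_le (Real.sqrt_nonneg _) fun ε hε v => ?_
    have hε0 : 0 < ε := (Real.sqrt_nonneg _).trans_lt hε
    have hε2 : c / m ≤ ε ^ 2 := ((Real.sqrt_lt' hε0).mp hε).le
    exact ⟨cdfOf_esd_sub_sub_le hS hT hε0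
        ((div_le_div_of_nonneg_right hTS m.cast_nonneg).trans hε2) v,
      cdfOf_esd_sub_sub_le hT hS hε0
        ((div_le_div_of_nonneg_right hST m.cast_nonneg).trans hε2) v⟩
  calc levyDist (cdfOf (esd S hS)) (cdfOf (esd T hT)) ^ 2 ≤ √(c / m) ^ 2 :=
        pow_le_pow_left₀ (levyDist_nonneg _ _) hL 2
    _ = c / m := Real.sq_sqrt hc

theorem levyDist_esd_gram_pow_four_le_general
    (p n : ℕ) (A B : Matrix (Fin p) (Fin n) ℝ) :
    (levyDist (cdfOf (esdGram A)) (cdfOf (esdGram B))) ^ 4 ≤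
      (2 / (p : ℝ) ^ 2) * Matrix.trace (A * Aᵀ + B * Bᵀ) *
        Matrix.trace ((A - B) * (A - B)ᵀ) := by
  set K := 2 * trace (A * Aᵀ + B * Bᵀ) * trace ((A - B) * (A - B)ᵀ)
  have hAB :=
    ((gram_isHermitian A).sub (gram_isHermitian B)).sq_sum_abs_eigenvalues_gram_sub_gram_le
  have hBA : (∑ i, |((gram_isHermitian B).sub (gram_isHermitian A)).eigenvalues i|) ^ 2 ≤ K := by
    have hswap : (B - A) * (B - A)ᵀ = (A - B) * (A - B)ᵀ := by
      rw [← neg_sub A B, transpose_neg, Matrix.neg_mul, Matrix.mul_neg, neg_neg]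
    simpa only [add_comm (B * Bᵀ), hswap] using
      ((gram_isHermitian B).sub (gram_isHermitian A)).sq_sum_abs_eigenvalues_gram_sub_gram_le
  have hL := levyDist_cdfOf_esd_sq_le (gram_isHermitian A) (gram_isHermitian B)
    (Real.le_sqrt_of_sq_le hBA) (Real.le_sqrt_of_sq_le hAB)
  calc levyDist (cdfOf (esdGram A)) (cdfOf (esdGram B)) ^ 4
      = (levyDist (cdfOf (esdGram A)) (cdfOf (esdGram B)) ^ 2) ^ 2 := by ring
    _ ≤ (√K / p) ^ 2 := pow_le_pow_left₀ (sq_nonneg _) hL 2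
    _ = 2 / (p : ℝ) ^ 2 * trace (A * Aᵀ + B * Bᵀ) * trace ((A - B) * (A - B)ᵀ) := by
        rw [div_pow, Real.sq_sqrt ((sq_nonneg _).trans hAB)]
        ring

/-- Lemma 5.5 / Corollary A.42 of Bai–Silverstein: the Lévy distance
between the ESDs of `AAᵀ` and `BBᵀ` satisfies
`L⁴ ≤ (2/p²)·Tr(AAᵀ + BBᵀ)·Tr((A−B)(A−B)ᵀ)`. -/
theorem levyDist_esd_gram_pow_four_le
    (p n : ℕ) (hp : 0 < p) (A B : Matrix (Fin p) (Fin n) ℝ) :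
    (levyDist (cdfOf (esdGram A)) (cdfOf (esdGram B))) ^ 4 ≤
      (2 / (p : ℝ) ^ 2) * Matrix.trace (A * Aᵀ + B * Bᵀ) *
        Matrix.trace ((A - B) * (A - B)ᵀ) :=
  levyDist_esd_gram_pow_four_le_general p n A B
end

section
/- Let p = p(n) with p/n → y ∈ (0,∞). For each n let {x_{ij,n} : 1 ≤ i ≤ p, 1 ≤ j ≤ n} be independent real random variables on a common probability space, let t_n ∈ [0,∞], and set y_{ij,n} = x_{ij,n} 1{|x_{ij,n}| ≤ t_n}. Assume that for some constant C, n · E[y_{ij,n}^{2m}] ≤ C for all i, j, n and all m ∈ {1, 2, 3, 4}, and that (1/p) Σ_{i=1}^{p} Σ_{j=1}^{n} x_{ij,n}² 1{|x_{ij,n}| > t_n} → 0 almost surely (respectively, in probability). Then limsup_{n→∞} (1/p) Σ_{i=1}^{p} Σ_{j=1}^{n} x_{ij,n}² < ∞ almost surely (respectively, in probability). -/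
open MeasureTheory ProbabilityTheory Filter Topology Matrix
open scoped ENNReal NNReal BigOperators Classical

/-!
Write `y = x 1{|x| ≤ t}` for the truncated entries. The independent summands `W = y²` satisfy
`∑ E W, ∑ E W², ∑ E W⁴ ≤ p C`, so the fourth-moment inequality
`E (∑ (W - E W))⁴ ≤ ∑ E (W - E W)⁴ + 3 (∑ Var W)²` and Markov's inequality give
`P((1/p) ∑ y² > C + 1) = O(1/p²)`, which is summable because `p ≍ n`. By Borel–Cantelli the
truncated averages are thus eventually at most `C + 1` almost surely, and the probability that
they exceed `C + 1` tends to zero. The full average is the truncated one plus the tail average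
`(1/p) ∑ x² 1{|x| > t}`, which tends to zero by hypothesis.
-/

namespace MeasureTheory

variable {Ω : Type*} [MeasurableSpace Ω] {μ : Measure Ω}

lemma memLp_iff_integrable_pow_of_even {f : Ω → ℝ} {n : ℕ} (hn : Even n) (hn0 : n ≠ 0)
    (hf : AEStronglyMeasurable f μ) : MemLp f n μ ↔ Integrable (fun ω => f ω ^ n) μ := by
  rw [← integrable_norm_rpow_iff hf (by exact_mod_cast hn0) (by simp)]
  simp [Real.norm_eq_abs, hn.pow_abs]

lemma MemLp.integrable_pow_of_le [IsFiniteMeasure μ] {X : Ω → ℝ} {p k : ℕ}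
    (hX : MemLp X p μ) (hk : k ≤ p) : Integrable (fun ω => X ω ^ k) μ := by
  have := (hX.mono_exponent (by exact_mod_cast hk : (k : ℝ≥0∞) ≤ p)).integrable_norm_pow'
  exact (integrable_norm_iff (hX.1.pow k)).mp (by simpa [norm_pow] using this)

lemma measure_ge_le_integral_pow_div [IsFiniteMeasure μ] {f : Ω → ℝ} {n : ℕ} (hn : Even n)
    (hf : Integrable (fun ω => f ω ^ n) μ) {s : ℝ} (hs : 0 < s) :
    μ {ω | s ≤ f ω} ≤ ENNReal.ofReal ((∫ ω, f ω ^ n ∂μ) / s ^ n) := by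
  have hmarkov := mul_meas_ge_le_integral_of_nonneg
    (Eventually.of_forall fun ω => hn.pow_nonneg (f ω)) hf (s ^ n)
  calc μ {ω | s ≤ f ω} ≤ μ {ω | s ^ n ≤ f ω ^ n} :=
        measure_mono fun ω (h : s ≤ f ω) => pow_le_pow_left₀ hs.le h n
    _ = ENNReal.ofReal (μ.real {ω | s ^ n ≤ f ω ^ n}) := (ofReal_measureReal (by finiteness)).symm
    _ ≤ _ := ENNReal.ofReal_le_ofReal <| by
        rw [le_div_iff₀ (by positivity), mul_comm]; exact hmarkov

lemma integral_finsetSum_eq_zero {ι : Type*} {Z : ι → Ω → ℝ} {s : Finset ι}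
    (hint : ∀ a ∈ s, Integrable (Z a) μ) (h0 : ∀ a ∈ s, μ[Z a] = 0) : μ[∑ a ∈ s, Z a] = 0 := by
  simp only [Finset.sum_apply]
  rw [integral_finsetSum s hint]
  exact Finset.sum_eq_zero h0

end MeasureTheory

namespace ProbabilityTheory

variable {Ω : Type*} [MeasurableSpace Ω] {μ : Measure Ω}

lemma IndepFun.integral_add_pow [IsFiniteMeasure μ] {X Y : Ω → ℝ} (hXY : IndepFun X Y μ)
    {n : ℕ} (hX : MemLp X n μ) (hY : MemLp Y n μ) :
    ∫ ω, (X ω + Y ω) ^ n ∂μ = ∑ k ∈ Finset.range (n + 1),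
      (∫ ω, X ω ^ k ∂μ) * (∫ ω, Y ω ^ (n - k) ∂μ) * n.choose k := by
  have hpow : ∀ k, IndepFun (fun ω => X ω ^ k) (fun ω => Y ω ^ (n - k)) μ := fun k =>
    hXY.comp (measurable_id.pow_const k) (measurable_id.pow_const (n - k))
  have hXk : ∀ k ∈ Finset.range (n + 1), Integrable (fun ω => X ω ^ k) μ := fun k hk =>
    hX.integrable_pow_of_le (Finset.mem_range_succ_iff.mp hk)
  have hYk : ∀ k, Integrable (fun ω => Y ω ^ (n - k)) μ := fun k =>
    hY.integrable_pow_of_le (Nat.sub_le n k)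
  simp_rw [add_pow]
  refine (integral_finsetSum _ fun k hk => ?_).trans (Finset.sum_congr rfl fun k hk => ?_)
  · exact ((hpow k).integrable_mul (hXk k hk) (hYk k)).mul_const _
  · rw [integral_mul_const, (hpow k).integral_fun_mul_eq_mul_integral (hXk k hk).1 (hYk k).1]

variable [IsProbabilityMeasure μ]

lemma IndepFun.integral_add_pow_four_of_integral_eq_zero {X Y : Ω → ℝ} (hXY : IndepFun X Y μ)
    (hX : MemLp X 4 μ) (hY : MemLp Y 4 μ) (hX0 : μ[X] = 0) (hY0 : μ[Y] = 0) :
    ∫ ω, (X ω + Y ω) ^ 4 ∂μ =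
      ∫ ω, X ω ^ 4 ∂μ + 6 * ((∫ ω, X ω ^ 2 ∂μ) * ∫ ω, Y ω ^ 2 ∂μ) + ∫ ω, Y ω ^ 4 ∂μ := by
  rw [hXY.integral_add_pow (n := 4) hX hY]
  simp [Finset.sum_range_succ, hX0, hY0, Nat.choose]
  ring

lemma iIndepFun.integral_sum_sq_of_integral_eq_zero {ι : Type*} {Z : ι → Ω → ℝ}
    (hZ : iIndepFun Z μ) (h2 : ∀ a, MemLp (Z a) 2 μ) (h0 : ∀ a, μ[Z a] = 0) (s : Finset ι) :
    ∫ ω, (∑ a ∈ s, Z a ω) ^ 2 ∂μ = ∑ a ∈ s, ∫ ω, Z a ω ^ 2 ∂μ := by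
  have hsum0 : μ[∑ a ∈ s, Z a] = 0 :=
    integral_finsetSum_eq_zero (fun a _ => (h2 a).integrable one_le_two) fun a _ => h0 a
  simp only [← Finset.sum_apply]
  rw [← variance_of_integral_eq_zero (memLp_finsetSum' s fun a _ => h2 a).aemeasurable hsum0,
    IndepFun.variance_sum (fun a _ => h2 a) fun a _ b _ hab => hZ.indepFun hab]
  exact Finset.sum_congr rfl fun a _ => variance_of_integral_eq_zero (h2 a).aemeasurable (h0 a)

lemma iIndepFun.integral_sum_pow_four_le {ι : Type*} {Z : ι → Ω → ℝ} (hZ : iIndepFun Z μ)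
    (h4 : ∀ a, MemLp (Z a) 4 μ) (h0 : ∀ a, μ[Z a] = 0) (s : Finset ι) :
    ∫ ω, (∑ a ∈ s, Z a ω) ^ 4 ∂μ ≤
      ∑ a ∈ s, ∫ ω, Z a ω ^ 4 ∂μ + 3 * (∑ a ∈ s, ∫ ω, Z a ω ^ 2 ∂μ) ^ 2 := by
  classical
  have h2 a : MemLp (Z a) 2 μ := (h4 a).mono_exponent (by norm_num)
  induction s using Finset.induction_on with
  | empty => simp
  | @insert a s ha ih =>
    have hindep : IndepFun (Z a) (∑ b ∈ s, Z b) μ :=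
      (hZ.indepFun_finsetSum_of_notMem₀ (fun b => (h4 b).aemeasurable) ha).symm
    have hsum0 : μ[∑ b ∈ s, Z b] = 0 :=
      integral_finsetSum_eq_zero (fun b _ => (h4 b).integrable (by norm_num)) fun b _ => h0 b
    have hstep := hindep.integral_add_pow_four_of_integral_eq_zero (h4 a)
      (memLp_finsetSum' s fun b _ => h4 b) (h0 a) hsum0
    simp only [Finset.sum_apply] at hstep
    simp only [Finset.sum_insert ha, hstep, hZ.integral_sum_sq_of_integral_eq_zero h2 h0 s]
    nlinarith [sq_nonneg (∫ ω, Z a ω ^ 2 ∂μ)]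

lemma integral_sub_integral_pow_four_le {W : Ω → ℝ} (hW : MemLp W 4 μ) :
    ∫ ω, (W ω - μ[W]) ^ 4 ∂μ ≤ 16 * ∫ ω, W ω ^ 4 ∂μ := by
  have hW4 : Integrable (fun ω => W ω ^ 4) μ := hW.integrable_pow_of_le le_rfl
  have hjensen : μ[W] ^ 4 ≤ ∫ ω, W ω ^ 4 ∂μ :=
    (by decide : Even 4).convexOn_pow.map_integral_le (continuous_pow 4).continuousOn isClosed_univ
      (Eventually.of_forall fun _ => Set.mem_univ _) (hW.integrable (by norm_num)) hW4
  have hpt : ∀ ω, (W ω - μ[W]) ^ 4 ≤ 8 * W ω ^ 4 + 8 * μ[W] ^ 4 := fun ω => by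
    nlinarith [sq_nonneg (W ω + μ[W]), sq_nonneg (W ω ^ 2 - μ[W] ^ 2), sq_nonneg (W ω * μ[W])]
  calc ∫ ω, (W ω - μ[W]) ^ 4 ∂μ ≤ ∫ ω, (8 * W ω ^ 4 + 8 * μ[W] ^ 4) ∂μ :=
        integral_mono ((hW.sub (memLp_const _)).integrable_pow_of_le le_rfl)
          ((hW4.const_mul 8).add (integrable_const _)) hpt
    _ = 8 * ∫ ω, W ω ^ 4 ∂μ + 8 * μ[W] ^ 4 := by
        rw [integral_add (hW4.const_mul 8) (integrable_const _), integral_const_mul]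
        simp
    _ ≤ 16 * ∫ ω, W ω ^ 4 ∂μ := by linarith

lemma iIndepFun.measure_add_lt_sum_le {ι : Type*} [Fintype ι] {W : ι → Ω → ℝ}
    (hW : iIndepFun W μ) (h4 : ∀ a, MemLp (W a) 4 μ) {K s : ℝ}
    (hK1 : ∑ a, μ[W a] ≤ K) (hK2 : ∑ a, ∫ ω, W a ω ^ 2 ∂μ ≤ K)
    (hK4 : ∑ a, ∫ ω, W a ω ^ 4 ∂μ ≤ K) (hs : 0 < s) :
    μ {ω | K + s < ∑ a, W a ω} ≤ ENNReal.ofReal ((16 * K + 3 * K ^ 2) / s ^ 4) := by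
  set Z : ι → Ω → ℝ := fun a ω => W a ω - μ[W a]
  have hZ : iIndepFun Z μ :=
    hW.comp (fun a (x : ℝ) => x - ∫ ω, W a ω ∂μ) fun a => measurable_id.sub_const _
  have hZ4 a : MemLp (Z a) 4 μ := (h4 a).sub (memLp_const _)
  have hZ0 a : μ[Z a] = 0 := by
    simp [Z, integral_sub ((h4 a).integrable (by norm_num)) (integrable_const _)]
  have hZ2le a : ∫ ω, Z a ω ^ 2 ∂μ ≤ ∫ ω, W a ω ^ 2 ∂μ := by
    rw [← variance_eq_integral (h4 a).aemeasurable]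
    exact variance_le_expectation_sq (h4 a).1
  have hmoment : ∫ ω, (∑ a, Z a ω) ^ 4 ∂μ ≤ 16 * K + 3 * K ^ 2 := by
    have hZ2 : ∑ a, ∫ ω, Z a ω ^ 2 ∂μ ≤ K := (Finset.sum_le_sum fun a _ => hZ2le a).trans hK2
    have hZ4le : ∑ a, ∫ ω, Z a ω ^ 4 ∂μ ≤ 16 * K := by
      refine (Finset.sum_le_sum fun a _ => integral_sub_integral_pow_four_le (h4 a)).trans ?_
      rw [← Finset.mul_sum]
      linarith
    have hZ2nonneg : 0 ≤ ∑ a, ∫ ω, Z a ω ^ 2 ∂μ :=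
      Finset.sum_nonneg fun a _ => integral_nonneg fun ω => sq_nonneg _
    nlinarith [hZ.integral_sum_pow_four_le hZ4 hZ0 Finset.univ]
  have hsub : {ω | K + s < ∑ a, W a ω} ⊆ {ω | s ≤ ∑ a, Z a ω} := by
    intro ω (hω : K + s < ∑ a, W a ω)
    show s ≤ ∑ a, (W a ω - μ[W a])
    rw [Finset.sum_sub_distrib]
    linarith
  calc μ {ω | K + s < ∑ a, W a ω} ≤ μ {ω | s ≤ ∑ a, Z a ω} := measure_mono hsub
    _ ≤ ENNReal.ofReal ((∫ ω, (∑ a, Z a ω) ^ 4 ∂μ) / s ^ 4) :=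
        measure_ge_le_integral_pow_div (by decide)
          ((memLp_finsetSum _ fun a _ => hZ4 a).integrable_pow_of_le le_rfl) hs
    _ ≤ ENNReal.ofReal ((16 * K + 3 * K ^ 2) / s ^ 4) := by gcongr

end ProbabilityTheory

section TriangularArray

variable {Ω : Type*} [MeasurableSpace Ω] {μ : Measure Ω}

lemma measurable_trunc (t : ℝ≥0∞) : Measurable (trunc t) :=
  Measurable.ite (measurableSet_le (ENNReal.measurable_ofReal.comp measurable_abs) measurable_const)
    measurable_id measurable_const

lemma sq_eq_trunc_sq_add_tailSq (t : ℝ≥0∞) (v : ℝ) : v ^ 2 = trunc t v ^ 2 + tailSq t v := by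
  unfold trunc tailSq
  split_ifs <;> simp

lemma sum_le_of_forall_card_mul_le {ι : Type*} [Fintype ι] {a : ι → ℝ} {C : ℝ} (hC : 0 ≤ C)
    (h : ∀ j, Fintype.card ι * a j ≤ C) : ∑ j, a j ≤ C := by
  rcases (Fintype.card ι).eq_zero_or_pos with hι | hι
  · simp [Fintype.card_eq_zero_iff.mp hι, hC]
  · refine le_of_mul_le_mul_left ?_ (Nat.cast_pos.mpr hι : (0 : ℝ) < Fintype.card ι)
    calc (Fintype.card ι : ℝ) * ∑ j, a j ≤ ∑ _j : ι, C := by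
          rw [Finset.mul_sum]; exact Finset.sum_le_sum fun j _ => h j
      _ = Fintype.card ι * C := by simp

variable [IsProbabilityMeasure μ]

lemma measure_add_one_lt_avg_sq_le {P N : ℕ} {y : Fin P → Fin N → Ω → ℝ}
    (hmeas : ∀ i j, Measurable (y i j))
    (hind : iIndepFun (fun ij : Fin P × Fin N => y ij.1 ij.2) μ)
    (h8 : ∀ i j, Integrable (fun ω => y i j ω ^ 8) μ) {C : ℝ} (hC : 0 ≤ C)
    (hmom : ∀ i j, ∀ m ∈ ({1, 2, 4} : Finset ℕ), (N : ℝ) * ∫ ω, y i j ω ^ (2 * m) ∂μ ≤ C) :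
    μ {ω | C + 1 < (1 / (P : ℝ)) * ∑ i, ∑ j, y i j ω ^ 2} ≤
      ENNReal.ofReal ((16 * C + 3 * C ^ 2) / (P : ℝ) ^ 2) := by
  rcases Nat.eq_zero_or_pos P with rfl | hP
  · have : ¬ C + 1 < 0 := by linarith
    simp [this]
  have hPR : (1 : ℝ) ≤ P := Nat.one_le_cast.mpr hP
  set W : Fin P × Fin N → Ω → ℝ := fun ij ω => y ij.1 ij.2 ω ^ 2
  have hW4 ij : MemLp (W ij) 4 μ :=
    (memLp_iff_integrable_pow_of_even (by decide) (by norm_num)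
      ((hmeas ij.1 ij.2).pow_const 2).aestronglyMeasurable).mpr
      (by simpa [W, ← pow_mul] using h8 ij.1 ij.2)
  have hsum : ∀ m ∈ ({1, 2, 4} : Finset ℕ), ∑ ij, ∫ ω, W ij ω ^ m ∂μ ≤ P * C := by
    intro m hm
    simp only [W, ← pow_mul, Fintype.sum_prod_type]
    calc ∑ i, ∑ j, ∫ ω, y i j ω ^ (2 * m) ∂μ ≤ ∑ _i : Fin P, C :=
          Finset.sum_le_sum fun i _ => sum_le_of_forall_card_mul_le hC fun j => by
            simpa using hmom i j m hm
      _ = P * C := by simp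
  have hconc := (hind.comp (fun _ v => v ^ 2) fun _ => measurable_id.pow_const 2
    ).measure_add_lt_sum_le (W := W) hW4 (by simpa using hsum 1 (by simp)) (hsum 2 (by simp))
    (hsum 4 (by simp)) (by positivity : (0 : ℝ) < P)
  have hsub : {ω | C + 1 < (1 / (P : ℝ)) * ∑ i, ∑ j, y i j ω ^ 2} ⊆
      {ω | P * C + P < ∑ ij, W ij ω} := by
    intro ω (hω : C + 1 < _)
    show (P : ℝ) * C + P < ∑ ij, W ij ω
    rw [one_div, inv_mul_eq_div, lt_div_iff₀ (by positivity)] at hω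
    rw [Fintype.sum_prod_type]
    linarith
  refine (measure_mono hsub).trans (hconc.trans (ENNReal.ofReal_le_ofReal ?_))
  rw [div_le_div_iff₀ (by positivity) (by positivity)]
  have : 0 ≤ 16 * C * P ^ 2 * (P - 1) := by
    have : (0 : ℝ) ≤ P - 1 := by linarith
    positivity
  nlinarith

end TriangularArray

lemma summable_one_div_sq_of_tendsto_div {p : ℕ → ℕ} {y : ℝ} (hy : 0 < y)
    (hp : Tendsto (fun n => (p n : ℝ) / n) atTop (𝓝 y)) :
    Summable fun n => 1 / (p n : ℝ) ^ 2 := by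
  refine Summable.of_norm_bounded_eventually_nat
    ((Real.summable_one_div_nat_pow.mpr one_lt_two).mul_left ((2 / y) ^ 2)) ?_
  filter_upwards [hp.eventually (lt_mem_nhds (half_lt_self hy)), eventually_gt_atTop 0]
    with n hn hn0
  have hpn : y / 2 * n < p n := (lt_div_iff₀ (by positivity)).mp hn
  rw [Real.norm_of_nonneg (by positivity)]
  calc 1 / (p n : ℝ) ^ 2 ≤ 1 / (y / 2 * n) ^ 2 :=
        one_div_le_one_div_of_le (by positivity) (pow_le_pow_left₀ (by positivity) hpn.le 2)
    _ = (2 / y) ^ 2 * (1 / (n : ℝ) ^ 2) := by field_simp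

section BorelCantelli

variable {Ω : Type*} [MeasurableSpace Ω] {μ : Measure Ω} {S T R : ℕ → Ω → ℝ} {K : ℝ}

lemma ae_eventually_le_of_tsum_measure_ne_top (hST : ∀ n ω, S n ω = T n ω + R n ω)
    (hT : ∑' n, μ {ω | K < T n ω} ≠ ∞)
    (hR : ∀ᵐ ω ∂μ, Tendsto (fun n => R n ω) atTop (𝓝 0)) :
    ∀ᵐ ω ∂μ, ∀ᶠ n in atTop, S n ω ≤ K + 1 := by
  filter_upwards [hR, ae_eventually_notMem hT] with ω hω hωT
  filter_upwards [hωT, hω.eventually_lt_const one_pos] with n hTn hRn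
  rw [hST]
  exact add_le_add (not_lt.mp hTn) hRn.le

lemma tendsto_measure_lt_of_tsum_measure_ne_top (hST : ∀ n ω, S n ω = T n ω + R n ω)
    (hT : ∑' n, μ {ω | K < T n ω} ≠ ∞)
    (hR : Tendsto (fun n => μ {ω | 1 ≤ |R n ω|}) atTop (𝓝 0)) :
    Tendsto (fun n => μ {ω | K + 1 < S n ω}) atTop (𝓝 0) := by
  have hsum := (ENNReal.tendsto_atTop_zero_of_tsum_ne_top hT).add hR
  rw [add_zero] at hsum
  refine tendsto_of_tendsto_of_tendsto_of_le_of_le tendsto_const_nhds hsum (fun _ => bot_le)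
    fun n => (measure_mono fun ω (hω : K + 1 < S n ω) => ?_).trans (measure_union_le _ _)
  by_contra h
  simp only [Set.mem_union, Set.mem_ofPred_eq, not_or, not_lt, not_le] at h
  rw [hST] at hω
  linarith [le_abs_self (R n ω)]

end BorelCantelli

/-- Appendix lemma (ii): if additionally
`(1/p) Σ_{i,j} x_{ij}² 1{|x_{ij}| > t_n} → 0` a.s. (resp. in probability), then
`limsup (1/p) Σ_{i,j} x_{ij}² < ∞` a.s. (resp. the sums are bounded in probability). -/
theorem avg_squares_limsup_finite
    {Ω : Type*} [MeasurableSpace Ω] (Pr : Measure Ω) (hPr : IsProbabilityMeasure Pr)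
    (p : ℕ → ℕ) (y : ℝ) (hy : 0 < y)
    (hp : Tendsto (fun n : ℕ => (p n : ℝ) / (n : ℝ)) atTop (𝓝 y))
    (x : (n : ℕ) → Fin (p n) → Fin n → Ω → ℝ) (t : ℕ → ℝ≥0∞)
    (hmeas : ∀ n i j, Measurable (x n i j))
    (hind : ∀ n, iIndepFun
      (fun ij : Fin (p n) × Fin n => x n ij.1 ij.2) Pr)
    (hint : ∀ n i j, ∀ m ∈ Finset.Icc 1 4,
      Integrable (fun ω => (trunc (t n) (x n i j ω)) ^ (2 * m)) Pr)
    (C : ℝ)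
    (hmom : ∀ (n : ℕ) (i : Fin (p n)) (j : Fin n), ∀ m ∈ Finset.Icc 1 4,
      (n : ℝ) * ∫ ω, (trunc (t n) (x n i j ω)) ^ (2 * m) ∂Pr ≤ C) :
    -- almost sure version
    ((∀ᵐ ω ∂Pr, Tendsto
        (fun n : ℕ => (1 / (p n : ℝ)) * ∑ i : Fin (p n), ∑ j : Fin n,
          tailSq (t n) (x n i j ω)) atTop (𝓝 0)) →
      ∀ᵐ ω ∂Pr, ∃ D : ℝ, ∀ᶠ n : ℕ in atTop,
        (1 / (p n : ℝ)) * ∑ i : Fin (p n), ∑ j : Fin n, (x n i j ω) ^ 2 ≤ D) ∧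
    -- in-probability version
    ((∀ ε : ℝ, 0 < ε → Tendsto
        (fun n : ℕ => Pr {ω | ε ≤ |(1 / (p n : ℝ)) * ∑ i : Fin (p n), ∑ j : Fin n,
          tailSq (t n) (x n i j ω)|}) atTop (𝓝 0)) →
      ∀ ε : ℝ, 0 < ε → ∃ D : ℝ, ∀ᶠ n : ℕ in atTop,
        Pr {ω | D < (1 / (p n : ℝ)) * ∑ i : Fin (p n), ∑ j : Fin n, (x n i j ω) ^ 2}
          ≤ ENNReal.ofReal ε) := by
  have := hPr
  set C' := max C 0
  have hdecomp : ∀ n ω, (1 / (p n : ℝ)) * ∑ i, ∑ j, x n i j ω ^ 2 =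
      (1 / (p n : ℝ)) * ∑ i, ∑ j, trunc (t n) (x n i j ω) ^ 2 +
        (1 / (p n : ℝ)) * ∑ i, ∑ j, tailSq (t n) (x n i j ω) := fun n ω => by
    rw [← mul_add]
    simp_rw [← Finset.sum_add_distrib, ← sq_eq_trunc_sq_add_tailSq]
  have hA : ∑' n,
      Pr {ω | C' + 1 < (1 / (p n : ℝ)) * ∑ i, ∑ j, trunc (t n) (x n i j ω) ^ 2} ≠ ∞ := by
    refine ne_top_of_le_ne_top (((summable_one_div_sq_of_tendsto_div hy hp).mul_left
      (16 * C' + 3 * C' ^ 2)).tsum_ofReal_ne_top) (ENNReal.tsum_le_tsum fun n => ?_)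
    rw [mul_one_div]
    exact measure_add_one_lt_avg_sq_le (fun i j => (measurable_trunc _).comp (hmeas n i j))
      ((hind n).comp _ fun _ => measurable_trunc _)
      (fun i j => by simpa using hint n i j 4 (by simp)) (le_max_right _ _)
      fun i j m hm => (hmom n i j m (Finset.mem_Icc.mpr (by simp at hm; omega))).trans
        (le_max_left _ _)
  refine ⟨fun hTail => ?_, fun hTail ε hε => ⟨C' + 1 + 1, ?_⟩⟩
  · filter_upwards [ae_eventually_le_of_tsum_measure_ne_top hdecomp hA hTail] with ω hω
    exact ⟨_, hω⟩
  · exact (tendsto_measure_lt_of_tsum_measure_ne_top hdecomp hA (hTail 1 one_pos)).eventually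
      (eventually_le_nhds (ENNReal.ofReal_pos.mpr hε))
end

section
/- For every k ≥ 1, the set of special symmetric pair-partitions of {1,…,2k} equals the set of non-crossing pair-partitions of {1,…,2k}; that is, SS(2k) ∩ P₂(2k) = NC₂(2k). -/
open MeasureTheory ProbabilityTheory Filter Topology Matrix
open scoped ENNReal NNReal BigOperators Classical

/-! For a pair partition, the parity condition at a block `{u, v}` asks of every other block that
either none of its two elements lies in `(u, v)`, or both do and they have opposite parities.
A crossing puts exactly one element of a block inside `(u, v)`, so special symmetric pair
partitions are non-crossing. Conversely, in a non-crossing pair partition the open interval inside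
a block is a union of blocks, hence of even length, so the two elements of every block have
opposite parities; and the block with the largest minimum cannot enclose another block, so it is
`{u, u + 1}`. -/

lemma exists_lt_eq_pair_of_card_eq_two {B : Finset ℕ} (h : B.card = 2) :
    ∃ a b : ℕ, a < b ∧ B = {a, b} := by
  obtain ⟨a, b, hne, rfl⟩ := Finset.card_eq_two.mp h
  rcases lt_or_gt_of_ne hne with hab | hba
  · exact ⟨a, b, hab, rfl⟩
  · exact ⟨b, a, hba, Finset.pair_comm a b⟩

lemma eq_pair_of_card_eq_two {B : Finset ℕ} (h : B.card = 2) {a b : ℕ} (hab : a ≠ b)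
    (ha : a ∈ B) (hb : b ∈ B) : B = {a, b} :=
  (Finset.eq_of_subset_of_card_le (Finset.insert_subset ha (Finset.singleton_subset_iff.mpr hb))
    (by rw [h, Finset.card_pair hab])).symm

lemma card_filter_odd_eq_even_pair {a b u v : ℕ} (hpar : a % 2 ≠ b % 2)
    (hin : u < a ∧ a < v ↔ u < b ∧ b < v) :
    (({a, b} : Finset ℕ).filter (fun w => u < w ∧ w < v ∧ Odd w)).card =
      (({a, b} : Finset ℕ).filter (fun w => u < w ∧ w < v ∧ Even w)).card := by
  simp only [Finset.filter_insert, Finset.filter_singleton, Nat.odd_iff, Nat.even_iff]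
  split_ifs <;> grind

lemma card_filter_odd_ne_even_pair {a b u v : ℕ}
    (hin : ¬(u < a ∧ a < v ↔ u < b ∧ b < v)) :
    (({a, b} : Finset ℕ).filter (fun w => u < w ∧ w < v ∧ Odd w)).card ≠
      (({a, b} : Finset ℕ).filter (fun w => u < w ∧ w < v ∧ Even w)).card := by
  simp only [Finset.filter_insert, Finset.filter_singleton, Nat.odd_iff, Nat.even_iff]
  split_ifs <;> grind

lemma NonCrossing.mem_Ioo_iff {P : Finset (Finset ℕ)} (hNC : NonCrossing P)
    {V W : Finset ℕ} (hV : V ∈ P) (hW : W ∈ P) (hVW : Disjoint V W) {u v a b : ℕ}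
    (hu : u ∈ V) (hv : v ∈ V) (ha : a ∈ W) (hb : b ∈ W) :
    u < a ∧ a < v ↔ u < b ∧ b < v := by
  have hne : V ≠ W := by
    rintro rfl
    exact Finset.disjoint_left.mp hVW ha ha
  have key : ∀ x ∈ W, ∀ y ∈ W, u < x ∧ x < v → u < y ∧ y < v := by
    intro x hx y hy ⟨hux, hxv⟩
    have hyu : y ≠ u := fun h => Finset.disjoint_left.mp hVW hu (h ▸ hy)
    have hyv : y ≠ v := fun h => Finset.disjoint_left.mp hVW hv (h ▸ hy)
    by_contra hy'
    rcases (by omega : y < u ∨ v < y) with hyu' | hvy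
    · exact hNC ⟨y, u, x, v, hyu', hux, hxv, W, hW, V, hV, hne.symm, hy, hx, hu, hv⟩
    · exact hNC ⟨u, x, v, y, hux, hxv, hvy, V, hV, W, hW, hne, hu, hv, hx, hy⟩
  exact ⟨key a ha b hb, key b hb a ha⟩

lemma NonCrossing.exists_subset_Ioo {m : ℕ} {P : Finset (Finset ℕ)} (hP : IsPart m P)
    (hNC : NonCrossing P) {a b x : ℕ} (hB : ({a, b} : Finset ℕ) ∈ P)
    (hx : x ∈ Finset.Ioo a b) : ∃ C ∈ P, x ∈ C ∧ C ⊆ Finset.Ioo a b := by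
  have ha : a ∈ ({a, b} : Finset ℕ) := Finset.mem_insert_self a {b}
  have hb : b ∈ ({a, b} : Finset ℕ) := Finset.mem_insert_of_mem (Finset.mem_singleton_self b)
  have hax := Finset.mem_Icc.mp (hP.2.1 _ hB ha)
  have hxb := Finset.mem_Icc.mp (hP.2.1 _ hB hb)
  have hx' := Finset.mem_Ioo.mp hx
  obtain ⟨C, hC, hxC⟩ := hP.2.2.2 x (Finset.mem_Icc.mpr ⟨by omega, by omega⟩)
  have hCB : C ≠ {a, b} := by
    rintro rfl
    simp only [Finset.mem_insert, Finset.mem_singleton] at hxC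
    omega
  refine ⟨C, hC, hxC, fun y hy => Finset.mem_Ioo.mpr ?_⟩
  exact (hNC.mem_Ioo_iff hB hC (hP.2.2.1 _ hB _ hC hCB.symm) ha hb hxC hy).mp hx'

lemma NonCrossing.even_card_Ioo {m : ℕ} {P : Finset (Finset ℕ)} (hP : IsPart m P)
    (hpair : ∀ B ∈ P, B.card = 2) (hNC : NonCrossing P) {a b : ℕ}
    (hB : ({a, b} : Finset ℕ) ∈ P) : Even (Finset.Ioo a b).card := by
  have hcover : Finset.Ioo a b = (P.filter (· ⊆ Finset.Ioo a b)).biUnion id := by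
    ext x
    simp only [Finset.mem_biUnion, Finset.mem_filter, id]
    refine ⟨fun hx => ?_, fun ⟨C, ⟨_, hCI⟩, hxC⟩ => hCI hxC⟩
    obtain ⟨C, hC, hxC, hCI⟩ := hNC.exists_subset_Ioo hP hB hx
    exact ⟨C, ⟨hC, hCI⟩, hxC⟩
  have hdisj : ∀ C ∈ P.filter (· ⊆ Finset.Ioo a b), ∀ D ∈ P.filter (· ⊆ Finset.Ioo a b),
      C ≠ D → Disjoint (id C) (id D) := fun C hC D hD =>
    hP.2.2.1 C (Finset.mem_filter.mp hC).1 D (Finset.mem_filter.mp hD).1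
  rw [hcover, Finset.card_biUnion hdisj,
    Finset.sum_const_nat (f := fun C => (id C).card) fun C hC =>
      hpair C (Finset.mem_filter.mp hC).1]
  exact even_two.mul_left _

lemma NonCrossing.mod_two_ne {m : ℕ} {P : Finset (Finset ℕ)} (hP : IsPart m P)
    (hpair : ∀ B ∈ P, B.card = 2) (hNC : NonCrossing P) {a b : ℕ} (hab : a < b)
    (hB : ({a, b} : Finset ℕ) ∈ P) : a % 2 ≠ b % 2 := by
  have h := hNC.even_card_Ioo hP hpair hB
  rw [Nat.card_Ioo, Nat.even_iff] at h
  omega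

lemma NonCrossing.card_filter_odd_eq_even {m : ℕ} {P : Finset (Finset ℕ)} (hP : IsPart m P)
    (hpair : ∀ B ∈ P, B.card = 2) (hNC : NonCrossing P) {V W : Finset ℕ} (hV : V ∈ P)
    (hW : W ∈ P) (hVW : V ≠ W) {u v : ℕ} (hu : u ∈ V) (hv : v ∈ V) :
    (W.filter (fun w => u < w ∧ w < v ∧ Odd w)).card =
      (W.filter (fun w => u < w ∧ w < v ∧ Even w)).card := by
  obtain ⟨a, b, hab, rfl⟩ := exists_lt_eq_pair_of_card_eq_two (hpair W hW)
  exact card_filter_odd_eq_even_pair (hNC.mod_two_ne hP hpair hab hW)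
    (hNC.mem_Ioo_iff hV hW (hP.2.2.1 _ hV _ hW hVW) hu hv (Finset.mem_insert_self a {b})
      (Finset.mem_insert_of_mem (Finset.mem_singleton_self b)))

lemma NonCrossing.eq_succ_of_forall_min_le {m : ℕ} {P : Finset (Finset ℕ)} (hP : IsPart m P)
    (hNC : NonCrossing P) {u w : ℕ} (hB : ({u, w} : Finset ℕ) ∈ P) (huw : u < w)
    (hmax : ∀ C ∈ P, C.min ≤ ({u, w} : Finset ℕ).min) : w = u + 1 := by
  by_contra hw
  obtain ⟨C, hC, hC1, hCI⟩ :=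
    hNC.exists_subset_Ioo hP hB (Finset.mem_Ioo.mpr ⟨u.lt_succ_self, by omega⟩)
  obtain ⟨c, hc⟩ := Finset.min_of_mem hC1
  have hcu := (hmax C hC).trans (Finset.min_le (Finset.mem_insert_self u {w}))
  rw [hc, WithTop.coe_le_coe] at hcu
  have huc := (Finset.mem_Ioo.mp (hCI (Finset.mem_of_min hc))).1
  omega

lemma evenRuns_pair_succ (u : ℕ) : EvenRuns {u, u + 1} := by
  intro a b hab hrun ha hb
  have haB := hrun a le_rfl hab
  have hbB := hrun b hab le_rfl
  simp only [Finset.mem_insert, Finset.mem_singleton] at ha hb haB hbB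
  rw [Nat.even_iff]
  omega

lemma SpecialSymmetric.nonCrossing {k : ℕ} {P : Finset (Finset ℕ)} (h : SpecialSymmetric k P)
    (hpair : ∀ B ∈ P, B.card = 2) : NonCrossing P := by
  rintro ⟨a, b, c, d, hab, hbc, hcd, B, hB, C, hC, hne, haB, hcB, hbC, hdC⟩
  have hBac := eq_pair_of_card_eq_two (hpair B hB) (by omega) haB hcB
  have hCbd := eq_pair_of_card_eq_two (hpair C hC) (by omega) hbC hdC
  subst hBac hCbd
  refine card_filter_odd_ne_even_pair (by omega) (h.2.2 _ hB _ hC hne a haB c hcB (by omega) ?_)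
  intro x hx
  simp only [Finset.mem_insert, Finset.mem_singleton] at hx
  omega

theorem specialSymmetric_pair_iff_nonCrossing_pair_general
    (k : ℕ) (P : Finset (Finset ℕ)) :
    (SpecialSymmetric k P ∧ ∀ B ∈ P, B.card = 2) ↔
      (IsPart (2 * k) P ∧ (∀ B ∈ P, B.card = 2) ∧ NonCrossing P) := by
  constructor
  · rintro ⟨hSS, hpair⟩
    exact ⟨hSS.1, hpair, hSS.nonCrossing hpair⟩
  · rintro ⟨hP, hpair, hNC⟩
    refine ⟨⟨hP, fun B hB hmax => ?_, fun V hV W hW hVW u hu v hv _ _ =>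
      hNC.card_filter_odd_eq_even hP hpair hV hW hVW hu hv⟩, hpair⟩
    obtain ⟨u, w, huw, rfl⟩ := exists_lt_eq_pair_of_card_eq_two (hpair B hB)
    rw [hNC.eq_succ_of_forall_min_le hP hB huw hmax]
    exact evenRuns_pair_succ u

/-- the special symmetric pair-partitions of `{1,…,2k}` are exactly the
non-crossing pair-partitions: `SS(2k) ∩ P₂(2k) = NC₂(2k)`. -/
theorem specialSymmetric_pair_iff_nonCrossing_pair
    (k : ℕ) (hk : 1 ≤ k) (P : Finset (Finset ℕ)) :
    (SpecialSymmetric k P ∧ ∀ B ∈ P, B.card = 2) ↔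
      (IsPart (2 * k) P ∧ (∀ B ∈ P, B.card = 2) ∧ NonCrossing P) :=
  specialSymmetric_pair_iff_nonCrossing_pair_general k P
end

section
/- For every k ≥ 1 and every 0 ≤ r ≤ k − 1, the number of non-crossing pair-partitions of {1,…,2k} having exactly r blocks whose smaller element is even equals (1/(r+1)) · C(k, r) · C(k−1, r), where C(·,·) denotes the binomial coefficient. -/
open MeasureTheory ProbabilityTheory Filter Topology Matrix
open scoped ENNReal NNReal BigOperators Classical

/-!
Record a non-crossing pairing of `{1, …, 2k}` by the set `O` of the smaller elements of its
blocks. This is a bijection onto the ballot sets: the `k`-subsets `O` of `{1, …, 2k}` containing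
at least `j / 2` elements of every initial segment `{1, …, j}`. Its inverse matches the largest
element of `O` with its successor and recurses; blocks with even smaller element correspond to
the even elements of `O`.

For `k = n + 1`, a ballot set `O` is in turn encoded by `X = {1 ≤ x ≤ n | 2x ∈ O}` and
`Y = {1 ≤ m ≤ n | 2m + 1 ∉ O}`, both of size `r`, and the ballot condition becomes the
dominance of `X` over `Y`: every initial segment contains at least as many elements of `X` as
of `Y`.
Exchanging the tails of `X` and `Y` after the first point where `Y` gets ahead (the reflection
principle) matches the non-dominating pairs with the pairs of an `(r - 1)`- and an
`(r + 1)`-subset of `{1, …, n}`. Hence the count is `C(n, r)² - C(n, r - 1) C(n, r + 1)`, which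
equals `C(n + 1, r) C(n, r) / (r + 1)`.
-/

open Finset

def prefixCount (Z : Finset ℕ) (m : ℕ) : ℕ := #(Z.filter (· ≤ m))

lemma prefixCount_mono (Z : Finset ℕ) : Monotone (prefixCount Z) := fun _ _ h =>
  card_le_card (monotone_filter_right _ fun _ _ hx => hx.trans h)

lemma prefixCount_succ (Z : Finset ℕ) (m : ℕ) :
    prefixCount Z (m + 1) = prefixCount Z m + if m + 1 ∈ Z then 1 else 0 := by
  have hsplit : Z.filter (· ≤ m + 1) = Z.filter (· ≤ m) ∪ Z.filter (· = m + 1) := by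
    rw [← filter_or]
    exact filter_congr fun _ _ => Nat.le_succ_iff
  rw [prefixCount, hsplit, card_union_of_disjoint (disjoint_filter.2 fun _ _ h => by omega),
    filter_eq', prefixCount]
  split_ifs <;> simp

lemma prefixCount_zero_le_one (Z : Finset ℕ) : prefixCount Z 0 ≤ 1 :=
  card_le_one.2 fun a ha b hb => by simp only [mem_filter] at ha hb; omega

lemma prefixCount_zero_of_notMem {Z : Finset ℕ} (h : 0 ∉ Z) : prefixCount Z 0 = 0 :=
  card_eq_zero.2 <| filter_eq_empty_iff.2 fun x hx hx0 => h (by rwa [Nat.le_zero.1 hx0] at hx)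

lemma prefixCount_le_card (Z : Finset ℕ) (m : ℕ) : prefixCount Z m ≤ #Z := card_filter_le _ _

lemma prefixCount_eq_card {Z : Finset ℕ} {m : ℕ} (h : ∀ x ∈ Z, x ≤ m) :
    prefixCount Z m = #Z := by
  rw [prefixCount, filter_true_of_mem h]

lemma prefixCount_add_card_filter_Ioc (Z : Finset ℕ) {m j : ℕ} (h : m ≤ j) :
    prefixCount Z m + #(Z.filter fun x => m < x ∧ x ≤ j) = prefixCount Z j := by
  rw [prefixCount, prefixCount, ← card_union_of_disjoint
    (disjoint_filter.2 fun _ _ h1 h2 => by omega), ← filter_or]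
  congr 1
  exact filter_congr fun x _ => by omega

def Dominates (X Y : Finset ℕ) : Prop := ∀ m, prefixCount Y m ≤ prefixCount X m

lemma not_dominates_of_lt {X Y : Finset ℕ} {m : ℕ} (h : prefixCount X m < prefixCount Y m) :
    ¬ Dominates X Y :=
  fun hdom => (hdom m).not_gt h

lemma not_dominates_of_card_lt {X Y : Finset ℕ} (h : #X < #Y) : ¬ Dominates X Y := by
  have hbound : ∀ Z ⊆ X ∪ Y, ∀ x ∈ Z, x ≤ (X ∪ Y).sup id := fun _ hZ _ hx =>
    le_sup (f := id) (hZ hx)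
  refine not_dominates_of_lt (m := (X ∪ Y).sup id) ?_
  rwa [prefixCount_eq_card (hbound X subset_union_left),
    prefixCount_eq_card (hbound Y subset_union_right)]

section Reflection

def splice (v : ℕ) (X Y : Finset ℕ) : Finset ℕ := X.filter (· ≤ v) ∪ Y.filter (v < ·)

variable {v j : ℕ} {X Y : Finset ℕ}

lemma splice_subset {s : Finset ℕ} (hX : X ⊆ s) (hY : Y ⊆ s) : splice v X Y ⊆ s :=
  union_subset ((filter_subset _ _).trans hX) ((filter_subset _ _).trans hY)

lemma splice_splice : splice v (splice v X Y) (splice v Y X) = X := by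
  ext x
  simp only [splice, mem_union, mem_filter]
  by_cases hx : x ≤ v
  · simp [hx, not_lt.2 hx]
  · simp [hx, lt_of_not_ge hx]

lemma prefixCount_splice_of_le (hj : j ≤ v) :
    prefixCount (splice v X Y) j = prefixCount X j := by
  unfold prefixCount splice
  congr 1
  ext x
  simp only [mem_filter, mem_union]
  constructor
  · rintro ⟨⟨hx, -⟩ | ⟨-, hx⟩, h⟩ <;> first | exact ⟨hx, h⟩ | omega
  · rintro ⟨hx, h⟩
    exact ⟨.inl ⟨hx, h.trans hj⟩, h⟩

lemma prefixCount_splice_of_ge (hj : v ≤ j) :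
    prefixCount (splice v X Y) j + prefixCount Y v = prefixCount X v + prefixCount Y j := by
  have hfilter : (splice v X Y).filter (· ≤ j) =
      X.filter (· ≤ v) ∪ Y.filter fun x => v < x ∧ x ≤ j := by
    ext x
    simp only [splice, mem_filter, mem_union]
    constructor
    · rintro ⟨⟨hx, h⟩ | ⟨hx, h⟩, h'⟩
      exacts [.inl ⟨hx, h⟩, .inr ⟨hx, h, h'⟩]
    · rintro (⟨hx, h⟩ | ⟨hx, h, h'⟩)
      exacts [⟨.inl ⟨hx, h⟩, h.trans hj⟩, ⟨.inr ⟨hx, h⟩, h'⟩]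
  have hY := prefixCount_add_card_filter_Ioc Y hj
  rw [prefixCount, hfilter, card_union_of_disjoint
    (disjoint_left.2 fun _ h1 h2 => by simp only [mem_filter] at h1 h2; omega)]
  unfold prefixCount at hY ⊢
  omega

noncomputable def firstExcess (X Y : Finset ℕ) : ℕ :=
  sInf {m | prefixCount X m < prefixCount Y m}

lemma prefixCount_firstExcess_lt (h : ¬ Dominates X Y) :
    prefixCount X (firstExcess X Y) < prefixCount Y (firstExcess X Y) := by
  obtain ⟨m, hm⟩ : ∃ m, prefixCount X m < prefixCount Y m := by simpa [Dominates] using h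
  exact Nat.sInf_mem (s := {m | prefixCount X m < prefixCount Y m}) ⟨m, hm⟩

lemma prefixCount_le_of_lt_firstExcess (hj : j < firstExcess X Y) :
    prefixCount Y j ≤ prefixCount X j :=
  not_lt.1 (Nat.notMem_of_lt_sInf (s := {m | prefixCount X m < prefixCount Y m}) hj)

/-- Prefix counts grow by at most one per step. -/
lemma prefixCount_firstExcess (h : ¬ Dominates X Y) :
    prefixCount Y (firstExcess X Y) = prefixCount X (firstExcess X Y) + 1 := by
  have hlt := prefixCount_firstExcess_lt h
  have hle : ∀ j < firstExcess X Y, prefixCount Y j ≤ prefixCount X j :=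
    fun _ => prefixCount_le_of_lt_firstExcess
  generalize firstExcess X Y = v at hlt hle ⊢
  cases v with
  | zero => have := prefixCount_zero_le_one Y; omega
  | succ m =>
    have := hle m m.lt_succ_self
    rw [prefixCount_succ, prefixCount_succ] at hlt ⊢
    split_ifs at hlt ⊢ <;> omega

noncomputable def reflectPair (XY : Finset ℕ × Finset ℕ) : Finset ℕ × Finset ℕ :=
  (splice (firstExcess XY.1 XY.2) XY.1 XY.2, splice (firstExcess XY.1 XY.2) XY.2 XY.1)

lemma firstExcess_le {m : ℕ} (h : prefixCount X m < prefixCount Y m) : firstExcess X Y ≤ m :=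
  Nat.sInf_le h

lemma prefixCount_reflectPair_lt (h : ¬ Dominates X Y) :
    prefixCount (reflectPair (X, Y)).1 (firstExcess X Y)
      < prefixCount (reflectPair (X, Y)).2 (firstExcess X Y) := by
  simpa only [reflectPair, prefixCount_splice_of_le le_rfl] using prefixCount_firstExcess_lt h

lemma not_dominates_reflectPair (h : ¬ Dominates X Y) :
    ¬ Dominates (reflectPair (X, Y)).1 (reflectPair (X, Y)).2 :=
  not_dominates_of_lt (prefixCount_reflectPair_lt h)

lemma firstExcess_reflectPair (h : ¬ Dominates X Y) :
    firstExcess (reflectPair (X, Y)).1 (reflectPair (X, Y)).2 = firstExcess X Y := by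
  have hlt := prefixCount_reflectPair_lt h
  refine le_antisymm (firstExcess_le hlt) (not_lt.1 fun hbefore => ?_)
  have hexcess := prefixCount_firstExcess_lt (not_dominates_reflectPair h)
  simp only [reflectPair] at hbefore hexcess
  rw [prefixCount_splice_of_le hbefore.le, prefixCount_splice_of_le hbefore.le] at hexcess
  exact (prefixCount_le_of_lt_firstExcess hbefore).not_gt hexcess

lemma reflectPair_reflectPair (h : ¬ Dominates X Y) :
    reflectPair (reflectPair (X, Y)) = (X, Y) := by
  have hv := firstExcess_reflectPair h
  simp only [reflectPair] at hv ⊢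
  rw [hv, splice_splice, splice_splice]

lemma card_reflectPair (h : ¬ Dominates X Y) :
    #(reflectPair (X, Y)).1 + 1 = #Y ∧ #(reflectPair (X, Y)).2 = #X + 1 := by
  have hstep := prefixCount_firstExcess h
  simp only [reflectPair]
  set v := firstExcess X Y
  set N := max v ((X ∪ Y).sup id)
  have hbound : ∀ Z ⊆ X ∪ Y, ∀ x ∈ Z, x ≤ N := fun _ hZ _ hx =>
    (le_sup (f := id) (hZ hx)).trans (le_max_right _ _)
  have hXY : X ⊆ X ∪ Y := subset_union_left
  have hYX : Y ⊆ X ∪ Y := subset_union_right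
  have h1 := prefixCount_splice_of_ge (X := X) (Y := Y) (j := N) (le_max_left v _)
  have h2 := prefixCount_splice_of_ge (X := Y) (Y := X) (j := N) (le_max_left v _)
  rw [prefixCount_eq_card (hbound _ (splice_subset hXY hYX)),
    prefixCount_eq_card (hbound _ hYX)] at h1
  rw [prefixCount_eq_card (hbound _ (splice_subset hYX hXY)),
    prefixCount_eq_card (hbound _ hXY)] at h2
  omega

end Reflection

noncomputable def dominatingPairs (s : Finset ℕ) (r : ℕ) : Finset (Finset ℕ × Finset ℕ) :=
  (powersetCard r s ×ˢ powersetCard r s).filter fun XY => Dominates XY.1 XY.2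

/-- Reflection principle: `reflectPair` is an involution exchanging the two sides. -/
theorem card_filter_not_dominates (s : Finset ℕ) (r : ℕ) :
    #((powersetCard (r + 1) s ×ˢ powersetCard (r + 1) s).filter fun XY => ¬ Dominates XY.1 XY.2)
      = (#s).choose r * (#s).choose (r + 2) := by
  rw [← card_powersetCard, ← card_powersetCard, ← card_product]
  refine card_bij' (fun XY _ => reflectPair XY) (fun ST _ => reflectPair ST) ?_ ?_ ?_ ?_
  · rintro ⟨X, Y⟩ hXY
    simp only [mem_filter, mem_product, mem_powersetCard] at hXY ⊢
    obtain ⟨⟨⟨hX, hXc⟩, hY, hYc⟩, hnd⟩ := hXY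
    have := card_reflectPair hnd
    exact ⟨⟨splice_subset hX hY, by omega⟩, splice_subset hY hX, by omega⟩
  · rintro ⟨S, T⟩ hST
    simp only [mem_filter, mem_product, mem_powersetCard] at hST ⊢
    obtain ⟨⟨hS, hSc⟩, hT, hTc⟩ := hST
    have hnd := not_dominates_of_card_lt (X := S) (Y := T) (by omega)
    have := card_reflectPair hnd
    exact ⟨⟨⟨splice_subset hS hT, by omega⟩, splice_subset hT hS, by omega⟩,
      not_dominates_reflectPair hnd⟩
  · rintro ⟨X, Y⟩ hXY
    exact reflectPair_reflectPair (mem_filter.1 hXY).2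
  · rintro ⟨S, T⟩ hST
    simp only [mem_product, mem_powersetCard] at hST
    exact reflectPair_reflectPair (not_dominates_of_card_lt (by omega))

theorem card_dominatingPairs_succ (s : Finset ℕ) (r : ℕ) :
    #(dominatingPairs s (r + 1)) + (#s).choose r * (#s).choose (r + 2)
      = (#s).choose (r + 1) ^ 2 := by
  rw [← card_filter_not_dominates, dominatingPairs, card_filter_add_card_filter_not,
    card_product, card_powersetCard, sq]

theorem card_dominatingPairs_zero (s : Finset ℕ) : #(dominatingPairs s 0) = 1 := by
  simp [dominatingPairs, Dominates, filter_singleton]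

structure IsBallotSet (k : ℕ) (O : Finset ℕ) : Prop where
  subset : O ⊆ Icc 1 (2 * k)
  card_eq : #O = k
  ballot : ∀ j ≤ 2 * k, j ≤ 2 * prefixCount O j

noncomputable def ballotSets (k r : ℕ) : Finset (Finset ℕ) :=
  (Icc 1 (2 * k)).powerset.filter fun O => IsBallotSet k O ∧ #(O.filter Even) = r

section BallotSet

variable {n : ℕ} {O : Finset ℕ}

lemma IsBallotSet.zero_notMem {k : ℕ} (hO : IsBallotSet k O) : 0 ∉ O := fun h0 => by
  simpa using hO.subset h0

lemma IsBallotSet.one_mem (hO : IsBallotSet (n + 1) O) : 1 ∈ O := by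
  have hb := hO.ballot 1 (by omega)
  rw [prefixCount_succ, prefixCount_zero_of_notMem hO.zero_notMem] at hb
  by_contra h1
  simp [h1] at hb

lemma IsBallotSet.subset_Icc (hO : IsBallotSet (n + 1) O) : O ⊆ Icc 1 (2 * n + 1) := by
  have hb := hO.ballot (2 * n + 1) (by omega)
  have hfull : prefixCount O (2 * n + 1) = #O := by
    have := prefixCount_le_card O (2 * n + 1)
    rw [hO.card_eq] at this ⊢
    omega
  intro x hx
  have hxle : x ≤ 2 * n + 1 := by
    rw [prefixCount, card_filter_eq_iff] at hfull
    exact hfull x hx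
  have := hO.subset hx
  simp only [mem_Icc] at this ⊢
  omega

def evenHalves (n : ℕ) (O : Finset ℕ) : Finset ℕ := (Icc 1 n).filter (2 * · ∈ O)

def oddGaps (n : ℕ) (O : Finset ℕ) : Finset ℕ := (Icc 1 n).filter (2 * · + 1 ∉ O)

def interleave (n : ℕ) (X Y : Finset ℕ) : Finset ℕ :=
  X.image (2 * ·) ∪ (range (n + 1) \ Y).image (2 * · + 1)

lemma evenHalves_subset : evenHalves n O ⊆ Icc 1 n := filter_subset _ _

lemma oddGaps_subset : oddGaps n O ⊆ Icc 1 n := filter_subset _ _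

lemma prefixCount_evenHalves_succ {m : ℕ} (hm : m + 1 ≤ n) :
    prefixCount (evenHalves n O) (m + 1)
      = prefixCount (evenHalves n O) m + if 2 * m + 2 ∈ O then 1 else 0 := by
  simp [prefixCount_succ, evenHalves, hm, mul_add]

lemma prefixCount_oddGaps_succ {m : ℕ} (hm : m + 1 ≤ n) :
    prefixCount (oddGaps n O) (m + 1)
      = prefixCount (oddGaps n O) m + if 2 * m + 3 ∈ O then 0 else 1 := by
  simp [prefixCount_succ, oddGaps, hm, mul_add]

lemma prefixCount_add_prefixCount_oddGaps (h0 : 0 ∉ O) (h1 : 1 ∈ O) {m : ℕ} (hm : m ≤ n) :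
    prefixCount O (2 * m + 1) + prefixCount (oddGaps n O) m
      = prefixCount (evenHalves n O) m + m + 1 := by
  induction m with
  | zero =>
    have hX := prefixCount_zero_of_notMem (Z := evenHalves n O) (by simp [evenHalves])
    have hY := prefixCount_zero_of_notMem (Z := oddGaps n O) (by simp [oddGaps])
    rw [prefixCount_succ, prefixCount_zero_of_notMem h0, if_pos h1, hX, hY]
  | succ m ih =>
    have := ih (by omega)
    rw [prefixCount_evenHalves_succ hm, prefixCount_oddGaps_succ hm,
      show 2 * (m + 1) + 1 = 2 * m + 1 + 1 + 1 by ring, prefixCount_succ, prefixCount_succ]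
    split_ifs <;> omega

variable {X Y : Finset ℕ}

lemma mem_interleave {j : ℕ} :
    j ∈ interleave n X Y
      ↔ (∃ x ∈ X, 2 * x = j) ∨ ∃ m ≤ n, m ∉ Y ∧ 2 * m + 1 = j := by
  simp [interleave, and_assoc]

lemma interleave_subset (hX : X ⊆ Icc 1 n) : interleave n X Y ⊆ Icc 1 (2 * n + 1) := by
  intro j hj
  rw [mem_interleave] at hj
  rcases hj with ⟨x, hx, rfl⟩ | ⟨m, hm, -, rfl⟩
  · have := hX hx
    simp only [mem_Icc] at this ⊢
    omega
  · simp only [mem_Icc]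
    omega

lemma filter_even_interleave : (interleave n X Y).filter Even = X.image (2 * ·) := by
  ext j
  simp only [mem_filter, mem_interleave, mem_image]
  constructor
  · rintro ⟨⟨x, hx, rfl⟩ | ⟨m, -, -, rfl⟩, heven⟩
    · exact ⟨x, hx, rfl⟩
    · exact absurd heven (by simp [parity_simps])
  · rintro ⟨x, hx, rfl⟩
    exact ⟨.inl ⟨x, hx, rfl⟩, even_two_mul x⟩

lemma card_interleave (hY : Y ⊆ Icc 1 n) : #(interleave n X Y) + #Y = #X + (n + 1) := by
  have hYr : Y ⊆ range (n + 1) := fun y hy => by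
    have := hY hy
    simp only [mem_Icc, mem_range] at this ⊢
    omega
  have hdisj : Disjoint (X.image (2 * ·)) ((range (n + 1) \ Y).image (2 * · + 1)) :=
    disjoint_left.2 fun j h1 h2 => by
      simp only [mem_image] at h1 h2
      omega
  rw [interleave, card_union_of_disjoint hdisj,
    card_image_of_injective _ fun a b (h : 2 * a = 2 * b) => by omega,
    card_image_of_injective _ fun a b (h : 2 * a + 1 = 2 * b + 1) => by omega,
    card_sdiff_of_subset hYr, card_range]
  have := card_le_card hYr
  rw [card_range] at this
  omega

lemma evenHalves_interleave (hX : X ⊆ Icc 1 n) : evenHalves n (interleave n X Y) = X := by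
  ext x
  simp only [evenHalves, mem_filter, mem_interleave]
  constructor
  · rintro ⟨-, ⟨x', hx', hxx'⟩ | ⟨m, -, -, h⟩⟩
    · rwa [show x = x' by omega]
    · omega
  · intro hx
    exact ⟨hX hx, .inl ⟨x, hx, rfl⟩⟩

lemma oddGaps_interleave (hY : Y ⊆ Icc 1 n) : oddGaps n (interleave n X Y) = Y := by
  ext m
  simp only [oddGaps, mem_filter, mem_interleave, mem_Icc]
  constructor
  · rintro ⟨hm, hmiss⟩
    by_contra hmY
    exact hmiss (.inr ⟨m, hm.2, hmY, rfl⟩)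
  · intro hmY
    refine ⟨by simpa using hY hmY, ?_⟩
    rintro (⟨x, -, h⟩ | ⟨m', -, hm'Y, h⟩)
    · omega
    · exact hm'Y (by rwa [show m' = m by omega])

lemma interleave_evenHalves_oddGaps (h1 : 1 ∈ O) (hO : O ⊆ Icc 1 (2 * n + 1)) :
    interleave n (evenHalves n O) (oddGaps n O) = O := by
  ext j
  simp only [mem_interleave, evenHalves, oddGaps, mem_filter, mem_Icc, not_and, not_not]
  constructor
  · rintro (⟨x, ⟨-, hx⟩, rfl⟩ | ⟨m, hm, hmO, rfl⟩)
    · exact hx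
    · rcases Nat.eq_zero_or_pos m with rfl | hpos
      · exact h1
      · exact hmO ⟨hpos, hm⟩
  · intro hj
    have hb := hO hj
    simp only [mem_Icc] at hb
    rcases Nat.even_or_odd' j with ⟨x, rfl | rfl⟩
    · exact .inl ⟨x, ⟨⟨by omega, by omega⟩, hj⟩, rfl⟩
    · exact .inr ⟨x, by omega, fun _ => hj, rfl⟩

lemma two_mul_add_one_le_two_mul_prefixCount_iff (h0 : 0 ∉ O) (h1 : 1 ∈ O) {m : ℕ}
    (hm : m ≤ n) :
    2 * m + 1 ≤ 2 * prefixCount O (2 * m + 1)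
      ↔ prefixCount (oddGaps n O) m ≤ prefixCount (evenHalves n O) m := by
  have := prefixCount_add_prefixCount_oddGaps h0 h1 hm
  omega

lemma le_two_mul_prefixCount_of_odd
    (hodd : ∀ m ≤ n, 2 * m + 1 ≤ 2 * prefixCount O (2 * m + 1)) :
    ∀ j ≤ 2 * (n + 1), j ≤ 2 * prefixCount O j := by
  intro j hj
  rcases Nat.even_or_odd' j with ⟨m, rfl | rfl⟩
  · rcases m with _ | m
    · simp
    · have := hodd m (by omega)
      have := prefixCount_mono O (show 2 * m + 1 ≤ 2 * (m + 1) by omega)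
      omega
  · exact hodd m (by omega)

lemma IsBallotSet.card_evenHalves (hO : IsBallotSet (n + 1) O) :
    #(evenHalves n O) = #(O.filter Even) := by
  conv_rhs => rw [← interleave_evenHalves_oddGaps hO.one_mem hO.subset_Icc]
  rw [filter_even_interleave, card_image_of_injective _ fun a b (h : 2 * a = 2 * b) => by omega]

lemma IsBallotSet.card_oddGaps (hO : IsBallotSet (n + 1) O) :
    #(oddGaps n O) = #(evenHalves n O) := by
  have h := card_interleave (X := evenHalves n O) (oddGaps_subset (n := n) (O := O))
  rw [interleave_evenHalves_oddGaps hO.one_mem hO.subset_Icc, hO.card_eq] at h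
  omega

lemma IsBallotSet.dominates (hO : IsBallotSet (n + 1) O) :
    Dominates (evenHalves n O) (oddGaps n O) := by
  intro m
  rcases le_or_gt m n with hm | hm
  · exact (two_mul_add_one_le_two_mul_prefixCount_iff hO.zero_notMem hO.one_mem hm).1
      (hO.ballot _ (by omega))
  · have hbound : ∀ Z ⊆ Icc 1 n, ∀ x ∈ Z, x ≤ m := fun _ hZ _ hx =>
      (mem_Icc.1 (hZ hx)).2.trans hm.le
    rw [prefixCount_eq_card (hbound _ oddGaps_subset),
      prefixCount_eq_card (hbound _ evenHalves_subset), hO.card_oddGaps]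

lemma isBallotSet_interleave (hX : X ⊆ Icc 1 n) (hY : Y ⊆ Icc 1 n) (hcard : #X = #Y)
    (hdom : Dominates X Y) : IsBallotSet (n + 1) (interleave n X Y) := by
  have hsub := interleave_subset (Y := Y) hX
  have h0 : 0 ∉ interleave n X Y := fun h => by simpa using hsub h
  have h1 : 1 ∈ interleave n X Y :=
    mem_interleave.2 (.inr ⟨0, n.zero_le, fun h => by simpa using hY h, rfl⟩)
  refine ⟨hsub.trans (Icc_subset_Icc_right (by omega)), ?_,
    le_two_mul_prefixCount_of_odd fun m hm => ?_⟩
  · have := card_interleave (X := X) hY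
    omega
  · rw [two_mul_add_one_le_two_mul_prefixCount_iff h0 h1 hm, evenHalves_interleave hX,
      oddGaps_interleave hY]
    exact hdom m

end BallotSet

theorem card_ballotSets_succ (n r : ℕ) :
    #(ballotSets (n + 1) r) = #(dominatingPairs (Icc 1 n) r) := by
  refine card_bij' (fun O _ => (evenHalves n O, oddGaps n O))
    (fun XY _ => interleave n XY.1 XY.2) ?_ ?_ ?_ ?_
  · intro O hO
    simp only [ballotSets, mem_filter] at hO
    obtain ⟨-, hO, rfl⟩ := hO
    simp only [dominatingPairs, mem_filter, mem_product, mem_powersetCard]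
    exact ⟨⟨⟨evenHalves_subset, hO.card_evenHalves⟩, oddGaps_subset,
      hO.card_oddGaps.trans hO.card_evenHalves⟩, hO.dominates⟩
  · rintro ⟨X, Y⟩ hXY
    simp only [dominatingPairs, mem_filter, mem_product, mem_powersetCard] at hXY
    obtain ⟨⟨⟨hX, rfl⟩, hY, hYc⟩, hdom⟩ := hXY
    have hO := isBallotSet_interleave hX hY hYc.symm hdom
    simp only [ballotSets, mem_filter, mem_powerset]
    refine ⟨hO.subset, hO, ?_⟩
    rw [filter_even_interleave, card_image_of_injective _ fun a b (h : 2 * a = 2 * b) => by omega]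
  · intro O hO
    simp only [ballotSets, mem_filter] at hO
    exact interleave_evenHalves_oddGaps hO.2.1.one_mem hO.2.1.subset_Icc
  · rintro ⟨X, Y⟩ hXY
    simp only [dominatingPairs, mem_filter, mem_product, mem_powersetCard] at hXY
    exact Prod.ext (evenHalves_interleave hXY.1.1.1) (oddGaps_interleave hXY.1.2.1)

section MinOf

variable {B : Finset ℕ} {x : ℕ}

lemma minOf_eq_min' (h : B.Nonempty) : minOf B = B.min' h := by
  rw [minOf, ← coe_min' h, WithTop.untopD_coe]

lemma minOf_mem (h : B.Nonempty) : minOf B ∈ B := by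
  rw [minOf_eq_min' h]
  exact B.min'_mem h

lemma minOf_le (hx : x ∈ B) : minOf B ≤ x := by
  rw [minOf_eq_min' ⟨x, hx⟩]
  exact B.min'_le x hx

lemma minOf_eq_of_forall_le (hx : x ∈ B) (hle : ∀ y ∈ B, x ≤ y) : minOf B = x :=
  le_antisymm (minOf_le hx) (hle _ (minOf_mem ⟨x, hx⟩))

lemma minOf_pair_succ (i : ℕ) : minOf {i, i + 1} = i :=
  minOf_eq_of_forall_le (by simp) (by simp)

lemma minOf_image_of_monotone {f : ℕ → ℕ} (hf : Monotone f) (h : B.Nonempty) :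
    minOf (B.image f) = f (minOf B) :=
  minOf_eq_of_forall_le (mem_image_of_mem f (minOf_mem h))
    (forall_mem_image.2 fun _ hy => hf (minOf_le hy))

lemma eq_pair_of_card_eq_two_s15 (h : #B = 2) : ∃ v, minOf B < v ∧ B = {minOf B, v} := by
  obtain ⟨a, b, hab, rfl⟩ := card_eq_two.1 h
  wlog hlt : a < b generalizing a b
  · simpa only [pair_comm] using this b a hab.symm (by rwa [pair_comm]) (by omega)
  rw [minOf_eq_of_forall_le (x := a) (by simp) (by simp [hlt.le])]
  exact ⟨b, hlt, rfl⟩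

end MinOf

namespace IsPart

variable {m : ℕ} {P : Finset (Finset ℕ)} {B C : Finset ℕ}

lemma eq_of_mem_of_mem (hP : IsPart m P) (hB : B ∈ P) (hC : C ∈ P) {x : ℕ} (hxB : x ∈ B)
    (hxC : x ∈ C) : B = C :=
  by_contra fun hne => disjoint_left.1 (hP.2.2.1 B hB C hC hne) hxB hxC

lemma injOn_minOf (hP : IsPart m P) : Set.InjOn minOf P := fun B hB C hC h =>
  hP.eq_of_mem_of_mem hB hC (minOf_mem (hP.1 B hB)) (h ▸ minOf_mem (hP.1 C hC))

lemma minOf_mem_Icc (hP : IsPart m P) (hB : B ∈ P) : minOf B ∈ Icc 1 m :=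
  hP.2.1 B hB (minOf_mem (hP.1 B hB))

lemma sum_card (hP : IsPart m P) : ∑ B ∈ P, #B = m := by
  rw [← card_biUnion fun B hB C hC => hP.2.2.1 B hB C hC]
  have : P.biUnion (fun B => B) = Icc 1 m := by
    ext x
    simp only [mem_biUnion]
    exact ⟨fun ⟨B, hB, hx⟩ => hP.2.1 B hB hx, hP.2.2.2 x⟩
  simp [this]

lemma eq_empty_of_zero (hP : IsPart 0 P) : P = ∅ :=
  eq_empty_of_forall_notMem fun B hB => by
    obtain ⟨x, hx⟩ := hP.1 B hB
    simpa using hP.2.1 B hB hx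

end IsPart

lemma isPart_zero_empty : IsPart 0 ∅ := by
  simp [IsPart]

lemma NonCrossing.mono {P R : Finset (Finset ℕ)} (hP : NonCrossing P) (h : R ⊆ P) :
    NonCrossing R := by
  rintro ⟨a, b, c, d, hab, hbc, hcd, B, hB, C, hC, hBC, habcd⟩
  exact hP ⟨a, b, c, d, hab, hbc, hcd, B, h hB, C, h hC, hBC, habcd⟩

/-- A block of two neighbours cannot cross anything. -/
lemma nonCrossing_insert_pair_succ_iff {R : Finset (Finset ℕ)} (i : ℕ) :
    NonCrossing (insert {i, i + 1} R) ↔ NonCrossing R := by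
  refine ⟨fun h => h.mono (subset_insert _ _), fun hR => ?_⟩
  rintro ⟨a, b, c, d, hab, hbc, hcd, B, hB, C, hC, hBC, ha, hc, hb, hd⟩
  rw [mem_insert] at hB hC
  rcases hB with rfl | hB
  · simp only [mem_insert, mem_singleton] at ha hc
    omega
  rcases hC with rfl | hC
  · simp only [mem_insert, mem_singleton] at hb hd
    omega
  exact hR ⟨a, b, c, d, hab, hbc, hcd, B, hB, C, hC, hBC, ha, hc, hb, hd⟩

lemma nonCrossing_image_image_iff {f : ℕ → ℕ} (hf : StrictMono f) {Q : Finset (Finset ℕ)} :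
    NonCrossing (Q.image (image f)) ↔ NonCrossing Q := by
  have hinj : Function.Injective (image f : Finset ℕ → Finset ℕ) :=
    image_injective hf.injective
  constructor
  · rintro hQ ⟨a, b, c, d, hab, hbc, hcd, B, hB, C, hC, hBC, ha, hc, hb, hd⟩
    exact hQ ⟨f a, f b, f c, f d, hf hab, hf hbc, hf hcd, B.image f, mem_image_of_mem _ hB,
      C.image f, mem_image_of_mem _ hC, hinj.ne hBC, mem_image_of_mem f ha,
      mem_image_of_mem f hc, mem_image_of_mem f hb, mem_image_of_mem f hd⟩
  · rintro hQ ⟨a, b, c, d, hab, hbc, hcd, B, hB, C, hC, hBC, ha, hc, hb, hd⟩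
    obtain ⟨B, hB', rfl⟩ := mem_image.1 hB
    obtain ⟨C, hC', rfl⟩ := mem_image.1 hC
    obtain ⟨a, ha', rfl⟩ := mem_image.1 ha
    obtain ⟨b, hb', rfl⟩ := mem_image.1 hb
    obtain ⟨c, hc', rfl⟩ := mem_image.1 hc
    obtain ⟨d, hd', rfl⟩ := mem_image.1 hd
    exact hQ ⟨a, b, c, d, hf.lt_iff_lt.1 hab, hf.lt_iff_lt.1 hbc, hf.lt_iff_lt.1 hcd, B, hB',
      C, hC', fun h => hBC (h ▸ rfl), ha', hc', hb', hd'⟩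

def shiftUp (i x : ℕ) : ℕ := if x < i then x else x + 2

def shiftDown (i x : ℕ) : ℕ := if x < i then x else x - 2

section Shift

variable {i x : ℕ}

lemma strictMono_shiftUp : StrictMono (shiftUp i) := fun x y h => by
  unfold shiftUp
  split_ifs <;> omega

lemma shiftUp_ne_self : shiftUp i x ≠ i := by
  unfold shiftUp
  split_ifs <;> omega

lemma shiftUp_ne_succ : shiftUp i x ≠ i + 1 := by
  unfold shiftUp
  split_ifs <;> omega

lemma shiftUp_shiftDown (h : x ≠ i) (h' : x ≠ i + 1) : shiftUp i (shiftDown i x) = x := by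
  unfold shiftUp shiftDown
  split_ifs <;> omega

lemma shiftUp_of_lt (h : x < i) : shiftUp i x = x := if_pos h

lemma shiftUp_mem_Icc_iff {m : ℕ} (hi : 1 ≤ i) (hi' : i ≤ m + 1) :
    shiftUp i x ∈ Icc 1 (m + 2) ↔ x ∈ Icc 1 m := by
  unfold shiftUp
  simp only [mem_Icc]
  split_ifs <;> omega

lemma exists_shiftUp_eq (h : x ≠ i) (h' : x ≠ i + 1) : ∃ y, shiftUp i y = x :=
  ⟨shiftDown i x, shiftUp_shiftDown h h'⟩

end Shift

def insertAdjacentPair (i : ℕ) (Q : Finset (Finset ℕ)) : Finset (Finset ℕ) :=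
  insert {i, i + 1} (Q.image (image (shiftUp i)))

section InsertAdjacentPair

variable {i m : ℕ} {Q : Finset (Finset ℕ)}

lemma disjoint_pair_image_shiftUp (B : Finset ℕ) : Disjoint {i, i + 1} (B.image (shiftUp i)) :=
  disjoint_left.2 fun x hx hx' => by
    obtain ⟨y, -, rfl⟩ := mem_image.1 hx'
    simp only [mem_insert, mem_singleton] at hx
    exact hx.elim shiftUp_ne_self shiftUp_ne_succ

lemma injective_image_shiftUp : Function.Injective (image (shiftUp i)) :=
  image_injective strictMono_shiftUp.injective

lemma pairwiseDisjoint_insertAdjacentPair_iff :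
    (∀ B ∈ insertAdjacentPair i Q, ∀ C ∈ insertAdjacentPair i Q, B ≠ C → Disjoint B C)
      ↔ ∀ B ∈ Q, ∀ C ∈ Q, B ≠ C → Disjoint B C := by
  simp only [insertAdjacentPair, forall_mem_insert, forall_mem_image]
  refine ⟨fun h B hB C hC hBC => ?_, fun h => ⟨⟨fun h' => (h' rfl).elim,
    fun C _ _ => disjoint_pair_image_shiftUp C⟩,
    fun B hB => ⟨fun _ => (disjoint_pair_image_shiftUp B).symm, fun C hC hBC => ?_⟩⟩⟩
  · exact (disjoint_image strictMono_shiftUp.injective).1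
      ((h.2 hB).2 hC (injective_image_shiftUp.ne hBC))
  · exact (disjoint_image strictMono_shiftUp.injective).2 (h B hB C hC fun h' => hBC (h' ▸ rfl))

lemma covers_insertAdjacentPair_iff (hi : 1 ≤ i) (hi' : i ≤ m + 1) :
    (∀ x ∈ Icc 1 (m + 2), ∃ B ∈ insertAdjacentPair i Q, x ∈ B)
      ↔ ∀ x ∈ Icc 1 m, ∃ B ∈ Q, x ∈ B := by
  simp only [insertAdjacentPair, exists_mem_insert, exists_mem_image]
  constructor
  · intro h x hx
    rcases h _ ((shiftUp_mem_Icc_iff hi hi').2 hx) with hD | ⟨B, hB, hxB⟩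
    · simp only [mem_insert, mem_singleton] at hD
      exact hD.elim (absurd · shiftUp_ne_self) (absurd · shiftUp_ne_succ)
    · exact ⟨B, hB, strictMono_shiftUp.injective.mem_finset_image.1 hxB⟩
  · intro h x hx
    by_cases hD : x = i ∨ x = i + 1
    · exact .inl (by simpa using hD)
    push Not at hD
    obtain ⟨y, rfl⟩ := exists_shiftUp_eq hD.1 hD.2
    obtain ⟨B, hB, hy⟩ := h y ((shiftUp_mem_Icc_iff hi hi').1 hx)
    exact .inr ⟨B, hB, mem_image_of_mem _ hy⟩

lemma isPart_insertAdjacentPair_iff (hi : 1 ≤ i) (hi' : i ≤ m + 1) :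
    IsPart (m + 2) (insertAdjacentPair i Q) ↔ IsPart m Q := by
  refine and_congr ?_ (and_congr ?_ (and_congr pairwiseDisjoint_insertAdjacentPair_iff
    (covers_insertAdjacentPair_iff hi hi')))
  · simp [insertAdjacentPair]
  · simp only [insertAdjacentPair, forall_mem_insert, forall_mem_image, image_subset_iff,
      shiftUp_mem_Icc_iff hi hi']
    refine and_iff_right ?_
    simp only [insert_subset_iff, singleton_subset_iff, mem_Icc]
    omega

end InsertAdjacentPair

structure IsNonCrossingPairing (k : ℕ) (P : Finset (Finset ℕ)) : Prop where
  isPart : IsPart (2 * k) P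
  card_eq_two : ∀ B ∈ P, #B = 2
  nonCrossing : NonCrossing P

section NonCrossingPairing

variable {k i : ℕ} {P Q : Finset (Finset ℕ)}

lemma isNonCrossingPairing_insertAdjacentPair_iff (hi : 1 ≤ i) (hi' : i ≤ 2 * k + 1) :
    IsNonCrossingPairing (k + 1) (insertAdjacentPair i Q) ↔ IsNonCrossingPairing k Q := by
  have hpart := isPart_insertAdjacentPair_iff (Q := Q) hi hi'
  have hpair : (∀ B ∈ insertAdjacentPair i Q, #B = 2) ↔ ∀ B ∈ Q, #B = 2 := by
    simp [insertAdjacentPair, card_image_of_injective _ strictMono_shiftUp.injective]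
  have hnc := (nonCrossing_insert_pair_succ_iff (R := Q.image (image (shiftUp i))) i).trans
    (nonCrossing_image_image_iff strictMono_shiftUp)
  exact ⟨fun ⟨h₁, h₂, h₃⟩ => ⟨hpart.1 h₁, hpair.1 h₂, hnc.1 h₃⟩,
    fun ⟨h₁, h₂, h₃⟩ => ⟨hpart.2 h₁, hpair.2 h₂, hnc.2 h₃⟩⟩

lemma image_minOf_insertAdjacentPair (hQ : ∀ B ∈ Q, B.Nonempty) :
    (insertAdjacentPair i Q).image minOf = insert i ((Q.image minOf).image (shiftUp i)) := by
  rw [insertAdjacentPair, image_insert, minOf_pair_succ, image_image, image_image]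
  congr 1
  exact image_congr fun B hB => minOf_image_of_monotone strictMono_shiftUp.monotone (hQ B hB)

lemma card_filter_image_minOf {m : ℕ} (hP : IsPart m P) (p : ℕ → Prop) [DecidablePred p] :
    #((P.image minOf).filter p) = #(P.filter fun B => p (minOf B)) := by
  rw [filter_image, card_image_of_injOn (hP.injOn_minOf.mono (filter_subset _ _))]

lemma IsNonCrossingPairing.card_eq (hP : IsNonCrossingPairing k P) : #P = k := by
  have h := hP.isPart.sum_card
  rw [sum_congr rfl hP.card_eq_two, sum_const, smul_eq_mul] at h
  omega

/-- The blocks opened up to `j` cover `{1, …, j}`, and each has two elements. -/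
lemma IsNonCrossingPairing.le_two_mul_prefixCount (hP : IsNonCrossingPairing k P) {j : ℕ}
    (hj : j ≤ 2 * k) : j ≤ 2 * prefixCount (P.image minOf) j := by
  set opened := P.filter fun B => minOf B ≤ j
  have hcover : Icc 1 j ⊆ opened.biUnion id := fun x hx => by
    obtain ⟨B, hB, hxB⟩ := hP.isPart.2.2.2 x (Icc_subset_Icc_right hj hx)
    exact mem_biUnion.2 ⟨B, mem_filter.2 ⟨hB, (minOf_le hxB).trans (mem_Icc.1 hx).2⟩, hxB⟩
  have hsum : ∑ B ∈ opened, #B = 2 * #opened := by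
    rw [sum_congr rfl fun B hB => hP.card_eq_two B (mem_filter.1 hB).1, sum_const, smul_eq_mul,
      mul_comm]
  calc j = #(Icc 1 j) := by simp
    _ ≤ #(opened.biUnion id) := card_le_card hcover
    _ ≤ 2 * #opened := card_biUnion_le.trans_eq hsum
    _ = 2 * prefixCount (P.image minOf) j := by
      rw [prefixCount, card_filter_image_minOf hP.isPart]

lemma IsNonCrossingPairing.isBallotSet (hP : IsNonCrossingPairing k P) :
    IsBallotSet k (P.image minOf) :=
  ⟨image_subset_iff.2 fun _ hB => hP.isPart.minOf_mem_Icc hB,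
    (card_image_of_injOn hP.isPart.injOn_minOf).trans hP.card_eq,
    fun _ hj => hP.le_two_mul_prefixCount hj⟩

/-- The block opened last is `{i, i + 1}`: a longer block would be crossed by the block
containing `i + 1`, which opens earlier. -/
lemma IsNonCrossingPairing.pair_mem_of_isGreatest (hP : IsNonCrossingPairing k P)
    (hi : IsGreatest (P.image minOf : Set ℕ) i) : {i, i + 1} ∈ P := by
  obtain ⟨B, hB, hiB⟩ := mem_image.1 hi.1
  obtain ⟨v, hv, hBv⟩ := eq_pair_of_card_eq_two_s15 (hP.card_eq_two B hB)
  rw [hiB] at hv hBv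
  have hvB : v ∈ B := hBv ▸ mem_insert_of_mem (mem_singleton_self v)
  rcases eq_or_ne v (i + 1) with rfl | hne
  · rwa [← hBv]
  have hv2k := mem_Icc.1 (hP.isPart.2.1 B hB hvB)
  obtain ⟨C, hC, hsuccC⟩ := hP.isPart.2.2.2 (i + 1) (mem_Icc.2 ⟨by omega, by omega⟩)
  have hCB : C ≠ B := by
    rintro rfl
    rw [hBv, mem_insert, mem_singleton] at hsuccC
    omega
  have hminC : minOf C < i :=
    lt_of_le_of_ne (hi.2 (mem_image_of_mem _ hC)) (hiB ▸ hCB ∘ hP.isPart.injOn_minOf hC hB)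
  exact (hP.nonCrossing ⟨minOf C, i, i + 1, v, hminC, by omega, by omega, C, hC, B, hB, hCB,
    minOf_mem (hP.isPart.1 C hC), hsuccC, hiB ▸ minOf_mem (hP.isPart.1 B hB), hvB⟩).elim

lemma IsNonCrossingPairing.exists_eq_insertAdjacentPair (hP : IsNonCrossingPairing (k + 1) P)
    (hi : IsGreatest (P.image minOf : Set ℕ) i) :
    ∃ Q, IsNonCrossingPairing k Q ∧ P = insertAdjacentPair i Q := by
  have hD := hP.pair_mem_of_isGreatest hi
  have hbounds := hP.isPart.2.1 _ hD
  simp only [insert_subset_iff, singleton_subset_iff, mem_Icc] at hbounds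
  set Q := (P.erase {i, i + 1}).image (image (shiftDown i))
  have hback : ∀ B ∈ P.erase {i, i + 1}, (B.image (shiftDown i)).image (shiftUp i) = B := by
    intro B hB
    rw [image_image]
    refine (image_congr fun x hx => ?_).trans (image_id (s := B))
    have hxD := disjoint_left.1
      (hP.isPart.2.2.1 B (mem_of_mem_erase hB) _ hD (ne_of_mem_erase hB)) hx
    simp only [mem_insert, mem_singleton, not_or] at hxD
    exact shiftUp_shiftDown hxD.1 hxD.2
  have hPQ : P = insertAdjacentPair i Q := by
    rw [insertAdjacentPair, image_image,
      image_congr (f := image (shiftUp i) ∘ image (shiftDown i)) (g := id) hback, image_id,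
      insert_erase hD]
  exact ⟨Q, (isNonCrossingPairing_insertAdjacentPair_iff (by omega) (by omega)).1 (hPQ ▸ hP),
    hPQ⟩

end NonCrossingPairing

lemma IsBallotSet.erase_max' {k : ℕ} {O : Finset ℕ} (hO : IsBallotSet (k + 1) O)
    (hne : O.Nonempty) : IsBallotSet k (O.erase (O.max' hne)) := by
  set i := O.max' hne
  have hlt : ∀ x ∈ O.erase i, x < i := fun x hx => lt_max'_of_mem_erase_max' O hne hx
  have hi := mem_Icc.1 (hO.subset_Icc (max'_mem O hne))
  have hcard : #(O.erase i) = k := by rw [card_erase_of_mem (max'_mem O hne), hO.card_eq]; rfl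
  refine ⟨fun x hx => ?_, hcard, fun j hj => ?_⟩
  · have := mem_Icc.1 (hO.subset (mem_of_mem_erase hx))
    have := hlt x hx
    exact mem_Icc.2 ⟨by omega, by omega⟩
  · rcases lt_or_ge j i with hji | hij
    · have hsame : prefixCount (O.erase i) j = prefixCount O j := by
        rw [prefixCount, filter_erase, erase_eq_of_notMem (by simp only [mem_filter]; omega),
          prefixCount]
      rw [hsame]
      exact hO.ballot j (by omega)
    · rw [prefixCount_eq_card fun x hx => ((hlt x hx).trans_le hij).le, hcard]
      omega

theorem IsNonCrossingPairing.eq_of_image_minOf_eq {k : ℕ} {P Q : Finset (Finset ℕ)}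
    (hP : IsNonCrossingPairing k P) (hQ : IsNonCrossingPairing k Q)
    (h : P.image minOf = Q.image minOf) : P = Q := by
  induction k generalizing P Q with
  | zero => rw [hP.isPart.eq_empty_of_zero, hQ.isPart.eq_empty_of_zero]
  | succ k ih =>
    have hne : (P.image minOf).Nonempty := by
      rw [← card_pos, hP.isBallotSet.card_eq]
      omega
    obtain ⟨i, hi⟩ : ∃ i, IsGreatest (P.image minOf : Set ℕ) i :=
      ⟨_, isGreatest_max' _ hne⟩
    obtain ⟨P', hP', rfl⟩ := hP.exists_eq_insertAdjacentPair hi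
    obtain ⟨Q', hQ', rfl⟩ := hQ.exists_eq_insertAdjacentPair (h ▸ hi)
    rw [image_minOf_insertAdjacentPair hP'.isPart.1,
      image_minOf_insertAdjacentPair hQ'.isPart.1] at h
    have hnotMem : ∀ s : Finset ℕ, i ∉ s.image (shiftUp i) := fun _ => by
      simp [shiftUp_ne_self]
    have h' := congrArg (erase · i) h
    simp only [erase_insert (hnotMem _)] at h'
    rw [ih hP' hQ' (injective_image_shiftUp h')]

theorem IsBallotSet.exists_isNonCrossingPairing {k : ℕ} {O : Finset ℕ} (hO : IsBallotSet k O) :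
    ∃ P, IsNonCrossingPairing k P ∧ P.image minOf = O := by
  induction k generalizing O with
  | zero =>
    refine ⟨∅, ⟨isPart_zero_empty, by simp, by simp [NonCrossing]⟩, ?_⟩
    rw [image_empty, eq_comm, ← card_eq_zero, hO.card_eq]
  | succ k ih =>
    have hne : O.Nonempty := by
      rw [← card_pos, hO.card_eq]
      omega
    obtain ⟨P', hP', hP'O⟩ := ih (hO.erase_max' hne)
    have hi := mem_Icc.1 (hO.subset_Icc (max'_mem O hne))
    refine ⟨insertAdjacentPair (O.max' hne) P',
      (isNonCrossingPairing_insertAdjacentPair_iff hi.1 hi.2).2 hP', ?_⟩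
    rw [image_minOf_insertAdjacentPair hP'.isPart.1, hP'O,
      image_congr (f := shiftUp (O.max' hne)) (g := id)
        fun x hx => shiftUp_of_lt (lt_max'_of_mem_erase_max' O hne hx),
      image_id, insert_erase (max'_mem O hne)]

lemma mem_partitionsOf {m : ℕ} {P : Finset (Finset ℕ)} :
    P ∈ partitionsOf m ↔ IsPart m P := by
  rw [partitionsOf, mem_filter, mem_powerset, and_iff_right_iff_imp]
  exact fun hP B hB => mem_powerset.2 (hP.2.1 B hB)

theorem card_nonCrossingPairings_eq_card_ballotSets (k r : ℕ) :
    #((partitionsOf (2 * k)).filter fun P =>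
        (∀ B ∈ P, #B = 2) ∧ NonCrossing P ∧ #(P.filter fun B => Even (minOf B)) = r)
      = #(ballotSets k r) := by
  refine card_bij (fun P _ => P.image minOf) ?_ ?_ ?_
  · intro P hP
    rw [mem_filter, mem_partitionsOf] at hP
    obtain ⟨hpart, hpair, hnc, rfl⟩ := hP
    have hP : IsNonCrossingPairing k P := ⟨hpart, hpair, hnc⟩
    rw [ballotSets, mem_filter, mem_powerset]
    exact ⟨hP.isBallotSet.1, hP.isBallotSet, card_filter_image_minOf hpart _⟩
  · intro P hP Q hQ h
    rw [mem_filter, mem_partitionsOf] at hP hQ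
    exact IsNonCrossingPairing.eq_of_image_minOf_eq ⟨hP.1, hP.2.1, hP.2.2.1⟩
      ⟨hQ.1, hQ.2.1, hQ.2.2.1⟩ h
  · intro O hO
    rw [ballotSets, mem_filter] at hO
    obtain ⟨P, hP, rfl⟩ := hO.2.1.exists_isNonCrossingPairing
    exact ⟨P, mem_filter.2 ⟨mem_partitionsOf.2 hP.isPart, hP.card_eq_two, hP.nonCrossing,
      (card_filter_image_minOf hP.isPart _).symm.trans hO.2.2⟩, rfl⟩

lemma choose_succ_mul_add_choose_mul (n j : ℕ) :
    n.choose (j + 1) * (j + 1) + n.choose j * j = n * n.choose j := by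
  have h := Nat.add_one_mul_choose_eq n j
  rw [Nat.choose_succ_succ] at h
  linarith

lemma sq_choose_sub_choose_mul_choose_mul (n r : ℕ) :
    ((n.choose (r + 1) : ℝ) ^ 2 - n.choose r * n.choose (r + 2)) * (r + 2)
      = (n + 1).choose (r + 1) * n.choose (r + 1) := by
  have e1 : (n.choose (r + 1) * (r + 1) + n.choose r * r : ℝ) = n * n.choose r := by
    exact_mod_cast choose_succ_mul_add_choose_mul n r
  have e2 : (n.choose (r + 2) * (r + 2) + n.choose (r + 1) * (r + 1) : ℝ)
      = n * n.choose (r + 1) := by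
    exact_mod_cast choose_succ_mul_add_choose_mul n (r + 1)
  rw [Nat.choose_succ_succ]
  push_cast
  linear_combination (n.choose (r + 1) : ℝ) * e1 - (n.choose r : ℝ) * e2

theorem card_nonCrossing_pair_with_even_min_blocks_general
    (k : ℕ) (hk : 1 ≤ k) (r : ℕ) :
    ((((partitionsOf (2 * k)).filter (fun P =>
        (∀ B ∈ P, B.card = 2) ∧ NonCrossing P ∧
          (P.filter (fun B => Even (minOf B))).card = r)).card : ℝ))
      = (1 / ((r : ℝ) + 1)) * (Nat.choose k r : ℝ) * (Nat.choose (k - 1) r : ℝ) := by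
  obtain ⟨n, rfl⟩ := Nat.exists_eq_add_of_le' hk
  rw [card_nonCrossingPairings_eq_card_ballotSets, card_ballotSets_succ, Nat.add_sub_cancel]
  rcases r with _ | r
  · simp [card_dominatingPairs_zero]
  · have hcount := card_dominatingPairs_succ (Icc 1 n) r
    rw [Nat.card_Icc, Nat.add_sub_cancel] at hcount
    have hcast : (#(dominatingPairs (Icc 1 n) (r + 1)) : ℝ)
        = n.choose (r + 1) ^ 2 - n.choose r * n.choose (r + 2) := by
      rw [eq_sub_iff_add_eq]
      exact_mod_cast hcount
    rw [hcast, eq_div_of_mul_eq (by positivity) (sq_choose_sub_choose_mul_choose_mul n r)]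
    push_cast
    ring

/-- the number of non-crossing pair-partitions of `{1,…,2k}` with exactly
`r` blocks whose smaller element is even equals `(1/(r+1))·C(k,r)·C(k−1,r)`. -/
theorem card_nonCrossing_pair_with_even_min_blocks
    (k : ℕ) (hk : 1 ≤ k) (r : ℕ) (hr : r ≤ k - 1) :
    ((((partitionsOf (2 * k)).filter (fun P =>
        (∀ B ∈ P, B.card = 2) ∧ NonCrossing P ∧
          (P.filter (fun B => Even (minOf B))).card = r)).card : ℝ))
      = (1 / ((r : ℝ) + 1)) * (Nat.choose k r : ℝ) * (Nat.choose (k - 1) r : ℝ) :=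
  card_nonCrossing_pair_with_even_min_blocks_general k hk r
end
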